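/- arXiv:2105.01615 — 8 statements merged into one kernel-verified Lean document; each statement's English description precedes it below -/
import Mathlib

section
/- For every finite simple graph G' = (V', E') there exists a subset of edges E'' ⊆ E' such that for every vertex v ∈ V', deg_{E'}(v)/2 − 1 ≤ deg_{E''}(v) ≤ deg_{E'}(v)/2 + 1. -/
open Finset

namespace Stmt2

variable {V : Type*}

/-- `degIn F v`: the number of edges in the edge set `F` incident on the vertex `v`. -/
def degIn [DecidableEq V] (F : Finset (Sym2 V)) (v : V) : ℕ :=
  (F.filter (fun e => v ∈ e)).card

section Aux

variable [DecidableEq V]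

/-- Alternating split of a list: elements at even positions, elements at odd positions. -/
def alt : List (Sym2 V) → List (Sym2 V) × List (Sym2 V)
  | [] => ([], [])
  | e :: es => (e :: (alt es).2, (alt es).1)

lemma alt_perm : ∀ es : List (Sym2 V), ((alt es).1 ++ (alt es).2).Perm es
  | [] => by simp [alt]
  | e :: es => by
    rw [alt]
    exact (List.perm_append_comm.trans (alt_perm es)).cons e

/-- Edges of a walk given by its vertex list. -/
def tEdges : List V → List (Sym2 V)
  | [] => []
  | [_] => []
  | a :: b :: l => s(a, b) :: tEdges (b :: l)

/-- A trail in edge set `F`: consecutive edges are distinct and all lie in `F`. -/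
def IsTrail (F : Finset (Sym2 V)) (l : List V) : Prop :=
  (tEdges l).Nodup ∧ ∀ e ∈ tEdges l, e ∈ F

/-- Signed count of edges containing `v`, with alternating signs. -/
def dsum (v : V) : List (Sym2 V) → ℤ
  | [] => 0
  | e :: es => (if v ∈ e then 1 else 0) - dsum v es

lemma alt_count (v : V) :
    ∀ es : List (Sym2 V),
      ((alt es).1.countP (fun e => decide (v ∈ e)) : ℤ)
        - ((alt es).2.countP (fun e => decide (v ∈ e)) : ℤ) = dsum v es
  | [] => by simp [alt, dsum]
  | e :: es => by
    rw [alt, dsum, ← alt_count v es]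
    simp only [List.countP_cons]
    by_cases h : v ∈ e <;> simp [h] <;> push_cast <;> ring

lemma tEdges_cons_cons (a b : V) (l : List V) :
    tEdges (a :: b :: l) = s(a, b) :: tEdges (b :: l) := rfl

lemma tEdges_append (x : V) :
    ∀ (a : V) (l : List V),
      tEdges ((a :: l) ++ [x])
        = tEdges (a :: l) ++ [s((a :: l).getLast (List.cons_ne_nil a l), x)]
  | a, [] => by simp [tEdges]
  | a, b :: l => by
    rw [show (a :: b :: l) ++ [x] = a :: ((b :: l) ++ [x]) from rfl,
      show tEdges (a :: ((b :: l) ++ [x])) = s(a, b) :: tEdges ((b :: l) ++ [x]) from rfl,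
      tEdges_append x b l, tEdges_cons_cons]
    simp [List.getLast_cons]

lemma dsum_tEdges (v : V) :
    ∀ (l : List V) (a : V), (∀ e ∈ tEdges (a :: l), ¬ e.IsDiag) →
      dsum v (tEdges (a :: l)) =
        (if a = v then 1 else 0)
          - (-1 : ℤ) ^ (tEdges (a :: l)).length
              * (if (a :: l).getLast (List.cons_ne_nil a l) = v then 1 else 0)
  | [], a, _ => by
    simp [tEdges, dsum]
    by_cases h : a = v <;> simp [h]
  | b :: l, a, h => by
    have hab : a ≠ b := by
      have := h s(a, b) (by simp [tEdges_cons_cons])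
      simpa [Sym2.isDiag_iff_proj_eq] using this
    rw [tEdges_cons_cons, dsum,
      dsum_tEdges v l b (fun e he => h e (by simp [tEdges_cons_cons, he]))]
    have hmem : (if v ∈ s(a, b) then (1 : ℤ) else 0)
        = (if a = v then 1 else 0) + (if b = v then 1 else 0) := by
      by_cases h1 : a = v <;> by_cases h2 : b = v <;>
        simp_all [Sym2.mem_iff] <;> tauto
    rw [hmem]
    simp only [List.length_cons, pow_succ, List.getLast_cons (List.cons_ne_nil b l)]
    ring

lemma degIn_toFinset (es : List (Sym2 V)) (h : es.Nodup) (v : V) :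
    degIn es.toFinset v = es.countP (fun e => decide (v ∈ e)) := by
  unfold degIn
  rw [List.countP_eq_length_filter, ← List.toFinset_card_of_nodup (h.filter _),
    List.toFinset_filter]
  congr 1
  simp

lemma degIn_union (A B : Finset (Sym2 V)) (h : Disjoint A B) (v : V) :
    degIn (A ∪ B) v = degIn A v + degIn B v := by
  unfold degIn
  rw [filter_union, card_union_of_disjoint (disjoint_filter_filter h)]

lemma degIn_mono {A B : Finset (Sym2 V)} (h : A ⊆ B) (v : V) :
    degIn A v ≤ degIn B v :=
  card_le_card (filter_subset_filter _ h)

/-- Main combinatorial lemma: any loopless edge set can be split with local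
discrepancy at most 2. -/
lemma main_split (F : Finset (Sym2 V)) (hF : ∀ e ∈ F, ¬ e.IsDiag) :
    ∃ F' ⊆ F, ∀ v : V, |2 * (degIn F' v : ℤ) - (degIn F v : ℤ)| ≤ 2 := by
  classical
  revert hF
  induction F using Finset.strongInduction with
  | _ F ih =>
    intro hF
    rcases F.eq_empty_or_nonempty with rfl | hne
    · exact ⟨∅, Finset.Subset.refl _, fun v => by simp [degIn]⟩
    -- pick a starting edge
    obtain ⟨e₀, he₀⟩ := hne
    obtain ⟨⟨a, b⟩, hab⟩ := Quot.exists_rep e₀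
    -- the trail-length predicate
    set P : ℕ → Prop := fun n => ∃ l : List V, IsTrail F l ∧ (tEdges l).length = n ∧ l ≠ []
      with hPdef
    have hbound : ∀ m, P m → m ≤ F.card := by
      rintro m ⟨l, ⟨hnd, hmem⟩, hlen, -⟩
      rw [← hlen, ← List.toFinset_card_of_nodup hnd]
      exact Finset.card_le_card (fun e he => hmem e (List.mem_toFinset.1 he))
    have hP1 : P 1 := by
      refine ⟨[a, b], ⟨by simp [tEdges], ?_⟩, by simp [tEdges], by simp⟩
      intro e he
      simp only [tEdges, List.mem_singleton] at he
      subst he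
      rwa [show s(a, b) = e₀ from hab]
    have hcard1 : 1 ≤ F.card := Finset.card_pos.2 ⟨e₀, he₀⟩
    set n := Nat.findGreatest P F.card with hndef
    have hn1 : 1 ≤ n := Nat.le_findGreatest hcard1 hP1
    have hPn : P n := Nat.findGreatest_spec hcard1 hP1
    have hmax : ¬ P (n + 1) := by
      rcases le_or_gt (n + 1) F.card with h | h
      · exact Nat.findGreatest_is_greatest (Nat.lt_succ_self n) h
      · intro hp; exact absurd (hbound _ hp) (by omega)
    obtain ⟨l, ⟨hnd, hmem⟩, hlen, hlne⟩ := hPn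
    obtain ⟨c, l₀, rfl⟩ := List.exists_cons_of_ne_nil hlne
    set es := tEdges (c :: l₀) with hesdef
    set u := (c :: l₀).getLast (List.cons_ne_nil c l₀) with hudef
    -- maximality of trail at the two endpoints
    have hlast : ∀ e ∈ F, u ∈ e → e ∈ es := by
      intro e heF heu
      by_contra hnot
      obtain ⟨x, rfl⟩ := Sym2.mem_iff_exists.1 heu
      refine hmax ⟨(c :: l₀) ++ [x], ⟨?_, ?_⟩, ?_, by simp⟩
      · rw [tEdges_append]
        simp only [List.nodup_append, List.nodup_singleton]
        refine ⟨hnd, ?_, ?_⟩ <;> simp_all [List.disjoint_singleton]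
        exact fun a ha h => hnot (h ▸ ha)
      · intro e he
        rw [tEdges_append] at he
        rcases List.mem_append.1 he with h' | h'
        · exact hmem e h'
        · simp only [List.mem_singleton] at h'
          subst h'
          rwa [← hudef]
      · rw [tEdges_append]
        simp [← hesdef, hlen]
    have hhead : ∀ e ∈ F, c ∈ e → e ∈ es := by
      intro e heF hec
      by_contra hnot
      obtain ⟨x, rfl⟩ := Sym2.mem_iff_exists.1 hec
      refine hmax ⟨x :: c :: l₀, ⟨?_, ?_⟩, ?_, by simp⟩
      · rw [tEdges_cons_cons, List.nodup_cons]
        exact ⟨by rwa [Sym2.eq_swap] at hnot, hnd⟩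
      · intro e he
        rw [tEdges_cons_cons] at he
        rcases List.mem_cons.1 he with h' | h'
        · subst h'; rwa [Sym2.eq_swap]
        · exact hmem e h'
      · rw [tEdges_cons_cons]
        simp [← hesdef, hlen]
    -- peel the trail off
    set T : Finset (Sym2 V) := es.toFinset with hTdef
    have hTF : T ⊆ F := fun e he => hmem e (List.mem_toFinset.1 he)
    have hTne : T.Nonempty := by
      have hesne : es ≠ [] := by
        intro h'
        rw [h'] at hlen
        simp at hlen
        omega
      obtain ⟨e, l', hes'⟩ := List.exists_cons_of_ne_nil hesne
      exact ⟨e, List.mem_toFinset.2 (by rw [hes']; simp)⟩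
    set rest : Finset (Sym2 V) := F \ T with hrestdef
    have hss : rest ⊂ F := Finset.sdiff_ssubset hTF hTne
    obtain ⟨F₁, hF₁sub, hdisc₁⟩ :=
      ih rest hss (fun e he => hF e (Finset.mem_sdiff.1 he).1)
    -- the chosen half of the trail
    set ev : Finset (Sym2 V) := (alt es).1.toFinset with hevdef
    have hperm := alt_perm es
    have hndapp : ((alt es).1 ++ (alt es).2).Nodup := hperm.nodup_iff.2 hnd
    have hnd1 : (alt es).1.Nodup := (List.nodup_append.1 hndapp).1
    have hev_sub : ev ⊆ T := by
      intro e he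
      rw [hevdef, List.mem_toFinset] at he
      exact List.mem_toFinset.2 (hperm.mem_iff.1 (List.mem_append_left _ he))
    have hdisj : Disjoint ev F₁ :=
      Finset.disjoint_left.2 fun e he₁ he₂ =>
        (Finset.mem_sdiff.1 (hF₁sub he₂)).2 (hev_sub he₁)
    refine ⟨ev ∪ F₁, Finset.union_subset (hev_sub.trans hTF)
      (hF₁sub.trans (Finset.sdiff_subset)), fun v => ?_⟩
    have hdegF : degIn F v = degIn T v + degIn rest v := by
      rw [← degIn_union T rest (Finset.disjoint_sdiff), Finset.union_sdiff_of_subset hTF]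
    have hdegF' : degIn (ev ∪ F₁) v = degIn ev v + degIn F₁ v := degIn_union _ _ hdisj v
    -- counting on the trail
    have hcount : (degIn ev v : ℤ) - ((alt es).2.countP (fun e => decide (v ∈ e)) : ℤ)
        = dsum v es := by
      rw [hevdef, degIn_toFinset _ hnd1]
      exact alt_count v es
    have hsum : (degIn ev v : ℤ) + ((alt es).2.countP (fun e => decide (v ∈ e)) : ℤ)
        = degIn T v := by
      rw [hevdef, degIn_toFinset _ hnd1, hTdef, degIn_toFinset _ hnd]
      rw [← hperm.countP_eq]
      rw [List.countP_append]
      push_cast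
      ring
    have hkey : 2 * (degIn ev v : ℤ) - (degIn T v : ℤ) = dsum v es := by
      rw [← hcount, ← hsum]; ring
    have hdval : dsum v es
        = (if c = v then 1 else 0)
            - (-1 : ℤ) ^ es.length * (if u = v then 1 else 0) :=
      dsum_tEdges v l₀ c (fun e he => hF e (hmem e he))
    have hdisc₁v := hdisc₁ v
    by_cases hv : c = v ∨ u = v
    · -- endpoint: no edges at v outside the trail
      have hrest0 : degIn rest v = 0 := by
        rw [degIn, Finset.card_eq_zero, Finset.filter_eq_empty_iff]
        intro e he hve
        have heF := (Finset.mem_sdiff.1 he).1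
        have : e ∈ es := by
          rcases hv with rfl | rfl
          · exact hhead e heF hve
          · exact hlast e heF hve
        exact (Finset.mem_sdiff.1 he).2 (List.mem_toFinset.2 this)
      have hF₁0 : degIn F₁ v = 0 :=
        Nat.le_zero.1 (hrest0 ▸ degIn_mono hF₁sub v)
      have hpow : (-1 : ℤ) ^ es.length = 1 ∨ (-1 : ℤ) ^ es.length = -1 := by
        rcases Nat.even_or_odd es.length with h | h
        · exact Or.inl h.neg_one_pow
        · exact Or.inr h.neg_one_pow
      have h1 : (if c = v then (1:ℤ) else 0) = 0 ∨ (if c = v then (1:ℤ) else 0) = 1 := by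
        split <;> simp
      have h2 : (if u = v then (1:ℤ) else 0) = 0 ∨ (if u = v then (1:ℤ) else 0) = 1 := by
        split <;> simp
      rw [hdval] at hkey
      have hTeq : degIn F v = degIn T v := by rw [hdegF, hrest0]; omega
      have hFeq' : degIn (ev ∪ F₁) v = degIn ev v := by rw [hdegF', hF₁0]; omega
      rw [hTeq, hFeq', abs_le]
      rcases hpow with hp | hp <;> rw [hp] at hkey <;>
        rcases h1 with h1 | h1 <;> rcases h2 with h2 | h2 <;>
          rw [h1, h2] at hkey <;> omega
    · -- interior vertex: trail contributes zero discrepancy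
      push_neg at hv
      have h0 : dsum v es = 0 := by
        rw [hdval, if_neg hv.1, if_neg hv.2]; ring
      rw [h0] at hkey
      rw [hdegF, hdegF']
      rw [abs_le] at hdisc₁v ⊢
      push_cast at hkey hdisc₁v ⊢
      omega

end Aux

/-- Degree-split: for every finite simple graph `G' = (V', E')` there is a subset
`E'' ⊆ E'` of the edges such that the degree of every vertex in `E''` lies between
`deg_{E'}(v)/2 - 1` and `deg_{E'}(v)/2 + 1`. -/
theorem degree_split (G : SimpleGraph V) [Fintype V] [DecidableEq V] [DecidableRel G.Adj] :
    ∃ E'' ⊆ G.edgeFinset, ∀ v : V,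
      (degIn G.edgeFinset v : ℝ) / 2 - 1 ≤ (degIn E'' v : ℝ) ∧
      (degIn E'' v : ℝ) ≤ (degIn G.edgeFinset v : ℝ) / 2 + 1 := by
  obtain ⟨E'', hsub, h⟩ := main_split G.edgeFinset
    (fun e he => SimpleGraph.not_isDiag_of_mem_edgeSet G (SimpleGraph.mem_edgeFinset.1 he))
  refine ⟨E'', hsub, fun v => ?_⟩
  have := h v
  rw [abs_le] at this
  obtain ⟨h1, h2⟩ := this
  constructor
  · have : (degIn G.edgeFinset v : ℝ) ≤ 2 * degIn E'' v + 2 := by exact_mod_cast by linarith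
    linarith
  · have : 2 * (degIn E'' v : ℝ) ≤ degIn G.edgeFinset v + 2 := by exact_mod_cast by linarith
    linarith

end Stmt2
end

section
/- Let W = (e_0, e_1, …, e_k) be a walk in a finite simple graph, i.e., a sequence of pairwise distinct edges e_i = {u_i, v_i} such that v_i = u_{i+1} for all 0 ≤ i ≤ k−1, and let W^{even} = {e_{2i} : 0 ≤ 2i ≤ k} be the set of its even-indexed edges. Then every vertex v touched by the walk that is not one of the two endpoints u_0, v_k of the walk satisfies deg_{W^{even}}(v) = deg_W(v)/2, and each endpoint v ∈ {u_0, v_k} satisfies deg_W(v)/2 − 1 ≤ deg_{W^{even}}(v) ≤ deg_W(v)/2 + 1. -/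
open Finset

namespace Stmt3

variable {V : Type*}

/-- `degIn F v`: the number of edges in the edge set `F` incident on the vertex `v`. -/
def degIn [DecidableEq V] (F : Finset (Sym2 V)) (v : V) : ℕ :=
  (F.filter (fun e => v ∈ e)).card

/-- Let `W = (e_0, …, e_k)` be a walk in a finite simple graph `G`, i.e. a sequence of
pairwise distinct edges `e_i = {u i, v i}` of `G` with `v i = u (i+1)`, and let
`Weven` be the set of its even-indexed edges.  Then every vertex touched by the walk
other than the two endpoints `u 0, v k` satisfies `deg_{Weven}(x) = deg_W(x) / 2`,
and each endpoint `x ∈ {u 0, v k}` satisfies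
`deg_W(x)/2 - 1 ≤ deg_{Weven}(x) ≤ deg_W(x)/2 + 1`. -/
theorem walk_even_degrees (G : SimpleGraph V) [Fintype V] [DecidableEq V]
    [DecidableRel G.Adj] (k : ℕ) (u v : ℕ → V)
    (hadj : ∀ i ≤ k, G.Adj (u i) (v i))
    (hchain : ∀ i < k, v i = u (i + 1))
    (hdistinct : ∀ i ≤ k, ∀ j ≤ k, i ≠ j → s(u i, v i) ≠ s(u j, v j)) :
    ∀ W Weven : Finset (Sym2 V),
      W = (Finset.range (k + 1)).image (fun i => s(u i, v i)) →
      Weven = ((Finset.range (k + 1)).filter (fun i => Even i)).image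
        (fun i => s(u i, v i)) →
      (∀ x : V, (∃ e ∈ W, x ∈ e) → x ≠ u 0 → x ≠ v k →
        (degIn Weven x : ℝ) = (degIn W x : ℝ) / 2) ∧
      (∀ x : V, (x = u 0 ∨ x = v k) →
        (degIn W x : ℝ) / 2 - 1 ≤ (degIn Weven x : ℝ) ∧
        (degIn Weven x : ℝ) ≤ (degIn W x : ℝ) / 2 + 1) := by
  intro W Weven hW hWe
  have hne : ∀ i ≤ k, u i ≠ v i := fun i hi => (hadj i hi).ne
  have hinj : Set.InjOn (fun i => s(u i, v i)) ↑(range (k + 1)) := by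
    intro i hi j hj hij
    by_contra hcon
    exact hdistinct i (Nat.lt_succ_iff.mp (mem_range.mp hi)) j
      (Nat.lt_succ_iff.mp (mem_range.mp hj)) hcon hij
  have hdegW : ∀ x : V,
      degIn W x = ((range (k + 1)).filter (fun i => x ∈ s(u i, v i))).card := by
    intro x
    unfold degIn
    rw [hW, filter_image]
    exact card_image_of_injOn (hinj.mono (by exact_mod_cast filter_subset _ _))
  have hdegWe : ∀ x : V,
      degIn Weven x =
        (((range (k + 1)).filter (fun i => Even i)).filter
          (fun i => x ∈ s(u i, v i))).card := by
    intro x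
    unfold degIn
    rw [hWe, filter_image]
    refine card_image_of_injOn (hinj.mono ?_)
    intro p hp
    simp only [coe_filter, Set.mem_setOf_eq, mem_coe] at hp ⊢
    exact (mem_filter.mp hp.1).1
  have core : ∀ x : V, ∃ s c0 ck ce : ℕ,
      c0 ≤ 1 ∧ ck ≤ 1 ∧ ce ≤ ck ∧
      (x = u 0 ↔ c0 = 1) ∧ (x = v k ↔ ck = 1) ∧
      degIn W x + c0 + ck = 2 * s ∧
      degIn Weven x + ce = s := by
    intro x
    set S : Finset ℕ :=
      (range (k + 2)).filter (fun p => (p ≤ k ∧ x = u p) ∨ (p = k + 1 ∧ x = v k))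
      with hSdef
    have hSmem : ∀ p, p ∈ S ↔ ((p ≤ k ∧ x = u p) ∨ (p = k + 1 ∧ x = v k)) := by
      intro p
      simp only [hSdef, mem_filter, mem_range]
      constructor
      · exact fun h => h.2
      · intro h
        refine ⟨?_, h⟩
        rcases h with ⟨h1, _⟩ | ⟨h1, _⟩ <;> omega
    have hnc : ∀ p, p ∈ S → p + 1 ∉ S := by
      intro p hp hp1
      rw [hSmem] at hp hp1
      rcases hp with ⟨hpk, hxu⟩ | ⟨hpk, _⟩
      · rcases hp1 with ⟨hpk1, hxu1⟩ | ⟨hpk1, hxv⟩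
        · refine hne p hpk ?_
          rw [← hxu, hchain p (by omega)]
          exact hxu1
        · have hpe : p = k := by omega
          refine hne p hpk ?_
          rw [← hxu, hpe]
          exact hxv
      · rcases hp1 with ⟨h1, _⟩ | ⟨h1, _⟩ <;> omega
    have hSub : ∀ p ∈ S, p ≤ k + 1 := by
      intro p hp
      rcases (hSmem p).mp hp with ⟨h, _⟩ | ⟨h, _⟩ <;> omega
    have hmemA : ∀ i ≤ k, (x ∈ s(u i, v i) ↔ (i ∈ S ∨ i + 1 ∈ S)) := by
      intro i hik
      rw [Sym2.mem_iff, hSmem, hSmem]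
      constructor
      · rintro (h | h)
        · exact Or.inl (Or.inl ⟨hik, h⟩)
        · rcases Nat.lt_or_ge i k with hl | hg
          · exact Or.inr (Or.inl ⟨by omega, by rw [h, hchain i hl]⟩)
          · have hik' : i = k := by omega
            subst hik'
            exact Or.inr (Or.inr ⟨rfl, h⟩)
      · rintro ((⟨_, h⟩ | ⟨h1, _⟩) | (⟨h1, h2⟩ | ⟨h1, h2⟩))
        · exact Or.inl h
        · omega
        · refine Or.inr ?_
          rw [h2, ← hchain i (by omega)]
        · refine Or.inr ?_
          have hik' : i = k := by omega
          rw [hik']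
          exact h2
    -- the incidence sets
    have hAeq : (range (k + 1)).filter (fun i => x ∈ s(u i, v i)) =
        S.filter (fun p => p ≤ k) ∪
          (S.filter (fun p => 1 ≤ p)).image (fun p => p - 1) := by
      ext i
      simp only [mem_filter, mem_range, mem_union, mem_image, Nat.lt_succ_iff]
      constructor
      · rintro ⟨hik, hx⟩
        rcases (hmemA i hik).mp hx with h | h
        · exact Or.inl ⟨h, hik⟩
        · exact Or.inr ⟨i + 1, ⟨h, by omega⟩, by omega⟩
      · rintro (⟨hS, hik⟩ | ⟨p, ⟨hpS, hp1⟩, hpi⟩)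
        · exact ⟨hik, (hmemA i hik).mpr (Or.inl hS)⟩
        · have hpk : p ≤ k + 1 := hSub p hpS
          have hik : i ≤ k := by omega
          have hpe : p = i + 1 := by omega
          exact ⟨hik, (hmemA i hik).mpr (Or.inr (hpe ▸ hpS))⟩
    have hAeeq : ((range (k + 1)).filter (fun i => Even i)).filter
          (fun i => x ∈ s(u i, v i)) =
        S.filter (fun p => p ≤ k ∧ Even p) ∪
          (S.filter (fun p => 1 ≤ p ∧ Odd p)).image (fun p => p - 1) := by
      ext i
      simp only [mem_filter, mem_range, mem_union, mem_image, Nat.lt_succ_iff]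
      constructor
      · rintro ⟨⟨hik, hev⟩, hx⟩
        rcases (hmemA i hik).mp hx with h | h
        · exact Or.inl ⟨h, hik, hev⟩
        · refine Or.inr ⟨i + 1, ⟨h, by omega, ?_⟩, by omega⟩
          rw [Nat.odd_iff]
          rw [Nat.even_iff] at hev
          omega
      · rintro (⟨hS, hik, hev⟩ | ⟨p, ⟨hpS, hp1, hodd⟩, hpi⟩)
        · exact ⟨⟨hik, hev⟩, (hmemA i hik).mpr (Or.inl hS)⟩
        · have hpk : p ≤ k + 1 := hSub p hpS
          have hik : i ≤ k := by omega
          have hpe : p = i + 1 := by omega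
          have hev : Even i := by
            rw [Nat.even_iff]
            rw [Nat.odd_iff] at hodd
            omega
          exact ⟨⟨hik, hev⟩, (hmemA i hik).mpr (Or.inr (hpe ▸ hpS))⟩
    have hdisjA : Disjoint (S.filter (fun p => p ≤ k))
        ((S.filter (fun p => 1 ≤ p)).image (fun p => p - 1)) := by
      rw [disjoint_left]
      intro i hi1 hi2
      simp only [mem_filter, mem_image] at hi1 hi2
      obtain ⟨p, ⟨hpS, hp1⟩, hpi⟩ := hi2
      have hpe : p = i + 1 := by omega
      exact hnc i hi1.1 (hpe ▸ hpS)
    have hdisjAe : Disjoint (S.filter (fun p => p ≤ k ∧ Even p))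
        ((S.filter (fun p => 1 ≤ p ∧ Odd p)).image (fun p => p - 1)) := by
      rw [disjoint_left]
      intro i hi1 hi2
      simp only [mem_filter, mem_image] at hi1 hi2
      obtain ⟨p, ⟨hpS, hp1, _⟩, hpi⟩ := hi2
      have hpe : p = i + 1 := by omega
      exact hnc i hi1.1 (hpe ▸ hpS)
    have hinjsub : ∀ (P : ℕ → Prop) [DecidablePred P], (∀ p, P p → 1 ≤ p) →
        Set.InjOn (fun p => p - 1) ↑(S.filter P) := by
      intro P _ hP p hp q hq hpq
      simp only [mem_coe, mem_filter] at hp hq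
      have := hP p hp.2
      have := hP q hq.2
      simp only at hpq
      omega
    have hcardA : ((range (k + 1)).filter (fun i => x ∈ s(u i, v i))).card =
        (S.filter (fun p => p ≤ k)).card + (S.filter (fun p => 1 ≤ p)).card := by
      rw [hAeq, card_union_of_disjoint hdisjA,
        card_image_of_injOn (hinjsub _ (fun p hp => hp))]
    have hcardAe : (((range (k + 1)).filter (fun i => Even i)).filter
          (fun i => x ∈ s(u i, v i))).card =
        (S.filter (fun p => p ≤ k ∧ Even p)).card +
          (S.filter (fun p => 1 ≤ p ∧ Odd p)).card := by
      rw [hAeeq, card_union_of_disjoint hdisjAe,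
        card_image_of_injOn (hinjsub _ (fun p hp => hp.1))]
    -- counting the pieces of S
    set c0 : ℕ := if 0 ∈ S then 1 else 0 with hc0def
    set ck : ℕ := if k + 1 ∈ S then 1 else 0 with hckdef
    set ce : ℕ := if Odd k then ck else 0 with hcedef
    have hsplit : ∀ (P : ℕ → Prop) [DecidablePred P] (b : ℕ),
        (∀ p ∈ S, P p ∨ p = b) → (∀ p, ¬(P p ∧ p = b)) →
        (S.filter P).card + (if b ∈ S then 1 else 0) = S.card := by
      intro P _ b hall hnot
      have hU : S.filter P ∪ S.filter (fun p => p = b) = S := by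
        rw [← filter_or, filter_true_of_mem hall]
      have hD : Disjoint (S.filter P) (S.filter (fun p => p = b)) := by
        rw [disjoint_left]
        intro a ha hb
        exact hnot a ⟨(mem_filter.mp ha).2, (mem_filter.mp hb).2⟩
      have hcb : (S.filter (fun p => p = b)).card = if b ∈ S then 1 else 0 := by
        rw [filter_eq']
        split_ifs <;> simp
      rw [← hcb, ← card_union_of_disjoint hD, hU]
    have h1 : (S.filter (fun p => p ≤ k)).card + ck = S.card := by
      rw [hckdef]
      refine hsplit _ (k + 1) (fun p hp => ?_) (fun p hp => by omega)
      have := hSub p hp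
      omega
    have h2 : (S.filter (fun p => 1 ≤ p)).card + c0 = S.card := by
      rw [hc0def]
      exact hsplit _ 0 (fun p hp => by omega) (fun p hp => by omega)
    have h3 : (S.filter (fun p => (p ≤ k ∧ Even p) ∨ (1 ≤ p ∧ Odd p))).card + ce
        = S.card := by
      by_cases hok : Odd k
      · have hce : ce = ck := by rw [hcedef, if_pos hok]
        rw [hce, hckdef]
        refine hsplit _ (k + 1) (fun p hp => ?_) (fun p hp => ?_)
        · have := hSub p hp
          rcases Nat.even_or_odd p with he | ho
          · rw [Nat.even_iff] at he
            rw [Nat.odd_iff] at hok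
            rcases Nat.lt_or_ge p (k + 1) with hlt | hge
            · exact Or.inl (Or.inl ⟨by omega, by rw [Nat.even_iff]; omega⟩)
            · exact Or.inr (by omega)
          · rw [Nat.odd_iff] at ho
            rcases Nat.eq_zero_or_pos p with h0 | h0
            · omega
            · left; right
              exact ⟨h0, by rw [Nat.odd_iff]; omega⟩
        · rw [Nat.odd_iff] at hok
          rw [Nat.even_iff, Nat.odd_iff] at hp
          omega
      · have hce : ce = 0 := by rw [hcedef, if_neg hok]
        rw [hce, Nat.add_zero]
        rw [filter_true_of_mem]
        intro p hp
        have := hSub p hp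
        rw [Nat.not_odd_iff_even, Nat.even_iff] at hok
        rcases Nat.even_or_odd p with he | ho
        · rw [Nat.even_iff] at he
          left
          exact ⟨by omega, by rw [Nat.even_iff]; omega⟩
        · rw [Nat.odd_iff] at ho
          right
          exact ⟨by omega, by rw [Nat.odd_iff]; omega⟩
    have heo : (S.filter (fun p => p ≤ k ∧ Even p)).card +
          (S.filter (fun p => 1 ≤ p ∧ Odd p)).card =
        (S.filter (fun p => (p ≤ k ∧ Even p) ∨ (1 ≤ p ∧ Odd p))).card := by
      rw [filter_or]
      rw [card_union_of_disjoint]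
      rw [disjoint_left]
      intro a ha hb
      have h1 := (mem_filter.mp ha).2.2
      have h2 := (mem_filter.mp hb).2.2
      rw [Nat.even_iff] at h1
      rw [Nat.odd_iff] at h2
      omega
    have hiff0 : x = u 0 ↔ c0 = 1 := by
      have hm : 0 ∈ S ↔ x = u 0 := by
        rw [hSmem]
        constructor
        · rintro (⟨_, h⟩ | ⟨h, _⟩)
          · exact h
          · omega
        · intro h
          exact Or.inl ⟨Nat.zero_le _, h⟩
      rw [hc0def]
      split_ifs with h
      · simp [hm.mp h]
      · simp only [Nat.zero_ne_one, iff_false]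
        exact fun hx => h (hm.mpr hx)
    have hiffk : x = v k ↔ ck = 1 := by
      have hm : k + 1 ∈ S ↔ x = v k := by
        rw [hSmem]
        constructor
        · rintro (⟨h, _⟩ | ⟨_, h⟩)
          · omega
          · exact h
        · intro h
          exact Or.inr ⟨rfl, h⟩
      rw [hckdef]
      split_ifs with h
      · simp [hm.mp h]
      · simp only [Nat.zero_ne_one, iff_false]
        exact fun hx => h (hm.mpr hx)
    refine ⟨S.card, c0, ck, ce, ?_, ?_, ?_, hiff0, hiffk, ?_, ?_⟩
    · rw [hc0def]; split_ifs <;> omega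
    · rw [hckdef]; split_ifs <;> omega
    · rw [hcedef]; split_ifs <;> omega
    · rw [hdegW x, hcardA]
      omega
    · rw [hdegWe x, hcardAe, heo]
      omega
  constructor
  · intro x _ hxu hxv
    obtain ⟨s, c0, ck, ce, hc01, hck1, hce, hiff0, hiffk, hD, hE⟩ := core x
    have h0 : c0 = 0 := by
      have : ¬ c0 = 1 := fun h => hxu (hiff0.mpr h)
      omega
    have hk0 : ck = 0 := by
      have : ¬ ck = 1 := fun h => hxv (hiffk.mpr h)
      omega
    have hce0 : ce = 0 := by omega
    have e1 : degIn Weven x = s := by omega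
    have e2 : degIn W x = 2 * s := by omega
    rw [e1, e2]
    push_cast
    ring
  · intro x hx
    obtain ⟨s, c0, ck, ce, hc01, hck1, hce, hiff0, hiffk, hD, hE⟩ := core x
    have hD' : (degIn W x : ℝ) + c0 + ck = 2 * s := by exact_mod_cast hD
    have hE' : (degIn Weven x : ℝ) + ce = s := by exact_mod_cast hE
    have hce' : (ce : ℝ) ≤ ck := by exact_mod_cast hce
    have hck' : (ck : ℝ) ≤ 1 := by exact_mod_cast hck1
    have hc0' : (c0 : ℝ) ≤ 1 := by exact_mod_cast hc01
    have hce0 : (0 : ℝ) ≤ ce := by positivity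
    have hc00 : (0 : ℝ) ≤ c0 := by positivity
    have hck0 : (0 : ℝ) ≤ ck := by positivity
    constructor <;> linarith

end Stmt3
end

section
/- Consider any two finite simple graphs G' = (V, E'), G'' = (V, E'') on the same vertex set V, weight functions w' : E' → [0, 1], w'' : E'' → [0, 1], and a real number α with 0 ≤ α < 2/3, such that dist_V(w', w'') ≤ α·size(w''). Then there exists a weight function w̃ : E' → [0, 1] satisfying: (1) w̃(e) ≤ w'(e) for every edge e ∈ E'; (2) w̃(v) ≤ w''(v) for every vertex v ∈ V; (3) size(w'') ≤ (1 − 3α/2)^{−1}·size(w̃). -/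
open Finset

namespace Stmt8

variable {V : Type*}

/-- Total size of a weight function on the edges of `G`. -/
noncomputable def size (G : SimpleGraph V) [Fintype V] [DecidableEq V] [DecidableRel G.Adj]
    (w : Sym2 V → ℝ) : ℝ :=
  ∑ e ∈ G.edgeFinset, w e

/-- Total weight received by a vertex `v` from the edges of `G` incident on it. -/
noncomputable def vertexWeight (G : SimpleGraph V) [Fintype V] [DecidableEq V]
    [DecidableRel G.Adj] (w : Sym2 V → ℝ) (v : V) : ℝ :=
  ∑ e ∈ G.edgeFinset.filter (fun e => v ∈ e), w e

/-- The distance `dist_V(w₁, w₂) = ∑_{v ∈ V} |w₁(v) - w₂(v)|` between two weight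
functions defined on graphs sharing the vertex set `V`. -/
noncomputable def distV (G₁ G₂ : SimpleGraph V) [Fintype V] [DecidableEq V]
    [DecidableRel G₁.Adj] [DecidableRel G₂.Adj] (w₁ w₂ : Sym2 V → ℝ) : ℝ :=
  ∑ v : V, |vertexWeight G₁ w₁ v - vertexWeight G₂ w₂ v|

/-
Give each vertex the factor `c v = min 1 (w₂(v) / w₁(v))` and scale each edge `uv` of `G₁` by
`c u * c v`. The vertex constraint holds because `c u * c v ≤ c v` and `c v * w₁(v) ≤ w₂(v)`.
Since `1 - c u * c v ≤ (1 - c u) + (1 - c v)`, the size lost is at most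
`∑ v, (1 - c v) * w₁(v)`, and `(1 - c v) * w₁(v) ≤ |w₁(v) - w₂(v)|`, so the loss is at most
`dist_V(w₁, w₂)`. Finally the handshake identity `∑ v, w(v) = 2 * size(w)` gives
`size(w₂) ≤ size(w₁) + dist_V(w₁, w₂) / 2`.
-/

noncomputable def endpointProd (f : V → ℝ) : Sym2 V → ℝ :=
  Sym2.lift ⟨fun a b => f a * f b, fun a b => mul_comm (f a) (f b)⟩

noncomputable def endpointSum (f : V → ℝ) : Sym2 V → ℝ :=
  Sym2.lift ⟨fun a b => f a + f b, fun a b => add_comm (f a) (f b)⟩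

@[simp]
lemma endpointProd_mk (f : V → ℝ) (a b : V) : endpointProd f s(a, b) = f a * f b := rfl

@[simp]
lemma endpointSum_mk (f : V → ℝ) (a b : V) : endpointSum f s(a, b) = f a + f b := rfl

section UnitInterval

variable {f : V → ℝ}

lemma endpointProd_nonneg (hf0 : ∀ v, 0 ≤ f v) (e : Sym2 V) : 0 ≤ endpointProd f e := by
  induction e using Sym2.ind with
  | _ a b => exact mul_nonneg (hf0 a) (hf0 b)

lemma endpointProd_le_one (hf0 : ∀ v, 0 ≤ f v) (hf1 : ∀ v, f v ≤ 1) (e : Sym2 V) :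
    endpointProd f e ≤ 1 := by
  induction e using Sym2.ind with
  | _ a b => exact mul_le_one₀ (hf1 a) (hf0 b) (hf1 b)

lemma endpointProd_le_of_mem (hf0 : ∀ v, 0 ≤ f v) (hf1 : ∀ v, f v ≤ 1) {v : V} {e : Sym2 V}
    (hv : v ∈ e) : endpointProd f e ≤ f v := by
  induction e using Sym2.ind with
  | _ a b =>
    rcases Sym2.mem_iff.mp hv with rfl | rfl
    · exact mul_le_of_le_one_right (hf0 v) (hf1 b)
    · exact mul_le_of_le_one_left (hf0 v) (hf1 a)

lemma one_sub_endpointSum_le_endpointProd (hf1 : ∀ v, f v ≤ 1) (e : Sym2 V) :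
    1 - endpointSum (fun v => 1 - f v) e ≤ endpointProd f e := by
  induction e using Sym2.ind with
  | _ a b =>
    have := mul_nonneg (sub_nonneg.mpr (hf1 a)) (sub_nonneg.mpr (hf1 b))
    simp only [endpointSum_mk, endpointProd_mk]
    linarith

end UnitInterval

lemma min_div_nonneg {x y : ℝ} (hx : 0 ≤ x) (hy : 0 ≤ y) : 0 ≤ min 1 (y / x) :=
  le_min zero_le_one (div_nonneg hy hx)

lemma min_div_mul_le {x y : ℝ} (hx : 0 ≤ x) (hy : 0 ≤ y) : min 1 (y / x) * x ≤ y := by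
  rcases hx.eq_or_lt with rfl | hx
  · simpa using hy
  · exact (mul_le_mul_of_nonneg_right (min_le_right _ _) hx.le).trans_eq (div_mul_cancel₀ y hx.ne')

lemma one_sub_min_div_mul_le_abs {x y : ℝ} (hx : 0 ≤ x) : (1 - min 1 (y / x)) * x ≤ |x - y| := by
  rcases hx.eq_or_lt with rfl | hx
  · simp
  rcases le_or_gt x y with hxy | hyx
  · simp [min_eq_left ((one_le_div hx).mpr hxy)]
  · rw [min_eq_right ((div_lt_one hx).mpr hyx).le, sub_mul, one_mul, div_mul_cancel₀ y hx.ne']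
    exact le_abs_self _

section Graph

variable [Fintype V] [DecidableEq V] (G : SimpleGraph V) [DecidableRel G.Adj]

lemma sum_filter_mem_eq_endpointSum {e : Sym2 V} (he : ¬ e.IsDiag) (g : V → ℝ) :
    ∑ v ∈ univ.filter (fun v => v ∈ e), g v = endpointSum g e := by
  induction e using Sym2.ind with
  | _ a b =>
    have hab : a ≠ b := fun h => he (Sym2.mk_isDiag_iff.mpr h)
    have hends : univ.filter (fun v => v ∈ s(a, b)) = {a, b} := by
      ext v; simp [Sym2.mem_iff]
    rw [hends, sum_pair hab, endpointSum_mk]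

lemma sum_mul_vertexWeight (w : Sym2 V → ℝ) (g : V → ℝ) :
    ∑ v, g v * vertexWeight G w v = ∑ e ∈ G.edgeFinset, endpointSum g e * w e := by
  simp_rw [vertexWeight, mul_sum, sum_filter]
  rw [sum_comm]
  refine sum_congr rfl fun e he => ?_
  rw [← sum_filter, ← sum_mul,
    sum_filter_mem_eq_endpointSum (G.not_isDiag_of_mem_edgeSet (G.mem_edgeFinset.mp he))]

lemma sum_vertexWeight (w : Sym2 V → ℝ) : ∑ v, vertexWeight G w v = 2 * size G w := by
  have hends (e : Sym2 V) : endpointSum 1 e = 2 := by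
    induction e using Sym2.ind with
    | _ a b => norm_num
  simpa [hends, size, mul_sum] using sum_mul_vertexWeight G w 1

variable {G} {w : Sym2 V → ℝ}

lemma vertexWeight_nonneg (hw : ∀ e ∈ G.edgeFinset, 0 ≤ w e) (v : V) : 0 ≤ vertexWeight G w v :=
  sum_nonneg fun e he => hw e (mem_of_mem_filter e he)

variable {c : V → ℝ}

lemma vertexWeight_mul_endpointProd_le (hc0 : ∀ v, 0 ≤ c v) (hc1 : ∀ v, c v ≤ 1)
    (hw : ∀ e ∈ G.edgeFinset, 0 ≤ w e) (v : V) :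
    vertexWeight G (fun e => w e * endpointProd c e) v ≤ c v * vertexWeight G w v := by
  rw [vertexWeight, vertexWeight, mul_sum]
  refine sum_le_sum fun e he => ?_
  rw [mul_comm (c v)]
  exact mul_le_mul_of_nonneg_left (endpointProd_le_of_mem hc0 hc1 (mem_filter.mp he).2)
    (hw e (mem_of_mem_filter e he))

lemma size_sub_le_size_mul_endpointProd (hc1 : ∀ v, c v ≤ 1) (hw : ∀ e ∈ G.edgeFinset, 0 ≤ w e) :
    size G w - ∑ v, (1 - c v) * vertexWeight G w v ≤ size G (fun e => w e * endpointProd c e) := by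
  rw [sum_mul_vertexWeight, size, size, ← sum_sub_distrib]
  refine sum_le_sum fun e he => ?_
  have := mul_le_mul_of_nonneg_left (one_sub_endpointSum_le_endpointProd hc1 e) (hw e he)
  linarith

end Graph

lemma size_le_size_add_half_distV [Fintype V] [DecidableEq V] (G₁ G₂ : SimpleGraph V)
    [DecidableRel G₁.Adj] [DecidableRel G₂.Adj] (w₁ w₂ : Sym2 V → ℝ) :
    size G₂ w₂ ≤ size G₁ w₁ + distV G₁ G₂ w₁ w₂ / 2 := by
  have hsum : ∑ v, vertexWeight G₂ w₂ v ≤ ∑ v, vertexWeight G₁ w₁ v + distV G₁ G₂ w₁ w₂ := by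
    rw [distV, ← sum_add_distrib]
    exact sum_le_sum fun v _ => by
      linarith [neg_abs_le (vertexWeight G₁ w₁ v - vertexWeight G₂ w₂ v)]
  rw [sum_vertexWeight, sum_vertexWeight] at hsum
  linarith

theorem exists_scaled_weight_general (G₁ G₂ : SimpleGraph V) [Fintype V] [DecidableEq V]
    [DecidableRel G₁.Adj] [DecidableRel G₂.Adj]
    (w₁ w₂ : Sym2 V → ℝ)
    (hw₁ : ∀ e ∈ G₁.edgeFinset, 0 ≤ w₁ e ∧ w₁ e ≤ 1)
    (hw₂ : ∀ e ∈ G₂.edgeFinset, 0 ≤ w₂ e ∧ w₂ e ≤ 1)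
    (α : ℝ) (hα : α < 2 / 3)
    (hdist : distV G₁ G₂ w₁ w₂ ≤ α * size G₂ w₂) :
    ∃ wt : Sym2 V → ℝ,
      (∀ e ∈ G₁.edgeFinset, 0 ≤ wt e ∧ wt e ≤ 1) ∧
      (∀ e ∈ G₁.edgeFinset, wt e ≤ w₁ e) ∧
      (∀ v : V, vertexWeight G₁ wt v ≤ vertexWeight G₂ w₂ v) ∧
      size G₂ w₂ ≤ (1 - 3 * α / 2)⁻¹ * size G₁ wt := by
  have hw₁0 e he := (hw₁ e he).1
  have hW₁ := vertexWeight_nonneg hw₁0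
  have hW₂ := vertexWeight_nonneg fun e he => (hw₂ e he).1
  set c : V → ℝ := fun v => min 1 (vertexWeight G₂ w₂ v / vertexWeight G₁ w₁ v)
  have hc0 v : 0 ≤ c v := min_div_nonneg (hW₁ v) (hW₂ v)
  have hc1 v : c v ≤ 1 := min_le_left _ _
  have hc e := endpointProd_le_one hc0 hc1 e
  refine ⟨fun e => w₁ e * endpointProd c e, fun e he => ⟨?_, ?_⟩, fun e he => ?_, fun v => ?_, ?_⟩
  · exact mul_nonneg (hw₁0 e he) (endpointProd_nonneg hc0 e)
  · exact mul_le_one₀ (hw₁ e he).2 (endpointProd_nonneg hc0 e) (hc e)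
  · exact mul_le_of_le_one_right (hw₁0 e he) (hc e)
  · exact (vertexWeight_mul_endpointProd_le hc0 hc1 hw₁0 v).trans (min_div_mul_le (hW₁ v) (hW₂ v))
  · have hloss : ∑ v, (1 - c v) * vertexWeight G₁ w₁ v ≤ distV G₁ G₂ w₁ w₂ :=
      sum_le_sum fun v _ => one_sub_min_div_mul_le_abs (hW₁ v)
    rw [le_inv_mul_iff₀ (by linarith)]
    linarith [size_sub_le_size_mul_endpointProd hc1 hw₁0, size_le_size_add_half_distV G₁ G₂ w₁ w₂]

/-- If `dist_V(w₁, w₂) ≤ α·size(w₂)` for some `0 ≤ α < 2/3`, then there exists a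
weight function `w̃ : E₁ → [0,1]` with (1) `w̃(e) ≤ w₁(e)` on every edge of `G₁`,
(2) `w̃(v) ≤ w₂(v)` at every vertex, and (3) `size(w₂) ≤ (1 - 3α/2)⁻¹ · size(w̃)`. -/
theorem exists_scaled_weight (G₁ G₂ : SimpleGraph V) [Fintype V] [DecidableEq V]
    [DecidableRel G₁.Adj] [DecidableRel G₂.Adj]
    (w₁ w₂ : Sym2 V → ℝ)
    (hw₁ : ∀ e ∈ G₁.edgeFinset, 0 ≤ w₁ e ∧ w₁ e ≤ 1)
    (hw₂ : ∀ e ∈ G₂.edgeFinset, 0 ≤ w₂ e ∧ w₂ e ≤ 1)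
    (α : ℝ) (hα0 : 0 ≤ α) (hα : α < 2 / 3)
    (hdist : distV G₁ G₂ w₁ w₂ ≤ α * size G₂ w₂) :
    ∃ wt : Sym2 V → ℝ,
      (∀ e ∈ G₁.edgeFinset, 0 ≤ wt e ∧ wt e ≤ 1) ∧
      (∀ e ∈ G₁.edgeFinset, wt e ≤ w₁ e) ∧
      (∀ v : V, vertexWeight G₁ wt v ≤ vertexWeight G₂ w₂ v) ∧
      size G₂ w₂ ≤ (1 - 3 * α / 2)⁻¹ * size G₁ wt :=
  exists_scaled_weight_general G₁ G₂ w₁ w₂ hw₁ hw₂ α hα hdist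

end Stmt8
end

section
/- Consider any two finite simple graphs G' = (V, E'), G'' = (V, E'') on the same vertex set V and weight functions w' : E' → [0, 1], w'' : E'' → [0, 1] such that w''(x) > 0 for every vertex x that is an endpoint of some edge in E'. Define w̃ : E' → [0, 1] by w̃(u, v) = w'(u, v) / max(1, w'(u)/w''(u), w'(v)/w''(v)) for every edge (u, v) ∈ E'. Then size(w') − size(w̃) ≤ dist_V(w', w''). -/
/-!
Write `r x = w₁(x) / w₂(x)` and `g x = (w₁(x) - w₂(x))⁺ / w₁(x)`. Scaling the edge `uv` by
`M = max(1, r u, r v)` loses `w₁(uv) (1 - 1/M)`. If `M > 1` then `M = r x` for an endpoint `x`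
with `w₁(x) > w₂(x) > 0`, and `1 - 1/r x = g x`; so the loss is at most `w₁(uv) (g u + g v)`.
Summed over the edges, each vertex `x` collects `g x · w₁(x) ≤ |w₁(x) - w₂(x)|`.
-/

open Finset

namespace Stmt10

variable {V : Type*}

/-- Total size of a weight function on the edges of `G`. -/
noncomputable def size (G : SimpleGraph V) [Fintype V] [DecidableEq V] [DecidableRel G.Adj]
    (w : Sym2 V → ℝ) : ℝ :=
  ∑ e ∈ G.edgeFinset, w e

/-- Total weight received by a vertex `v` from the edges of `G` incident on it. -/
noncomputable def vertexWeight (G : SimpleGraph V) [Fintype V] [DecidableEq V]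
    [DecidableRel G.Adj] (w : Sym2 V → ℝ) (v : V) : ℝ :=
  ∑ e ∈ G.edgeFinset.filter (fun e => v ∈ e), w e

/-- The distance `dist_V(w₁, w₂) = ∑_{v ∈ V} |w₁(v) - w₂(v)|` between two weight
functions defined on graphs sharing the vertex set `V`. -/
noncomputable def distV (G₁ G₂ : SimpleGraph V) [Fintype V] [DecidableEq V]
    [DecidableRel G₁.Adj] [DecidableRel G₂.Adj] (w₁ w₂ : Sym2 V → ℝ) : ℝ :=
  ∑ v : V, |vertexWeight G₁ w₁ v - vertexWeight G₂ w₂ v|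

noncomputable def excessRatio (a b : ℝ) : ℝ :=
  max (a - b) 0 / a

theorem excessRatio_nonneg {a : ℝ} (b : ℝ) (ha : 0 ≤ a) : 0 ≤ excessRatio a b :=
  div_nonneg (le_max_right _ _) ha

theorem excessRatio_mul_le_abs_sub (a b : ℝ) : excessRatio a b * a ≤ |a - b| := by
  rcases eq_or_ne a 0 with rfl | ha
  · simp [excessRatio]
  · rw [excessRatio, div_mul_cancel₀ _ ha]
    exact max_le (le_abs_self _) (abs_nonneg _)

theorem one_sub_inv_max_one_div_le_excessRatio {a : ℝ} (b : ℝ) (ha : 0 ≤ a) :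
    1 - (max 1 (a / b))⁻¹ ≤ excessRatio a b := by
  rcases le_or_gt (a / b) 1 with hab | hab
  · simpa [max_eq_left hab] using excessRatio_nonneg b ha
  · have hb : 0 < b := by
      by_contra! hb
      linarith [div_nonpos_of_nonneg_of_nonpos ha hb]
    have hba : b < a := by rwa [one_lt_div hb] at hab
    rw [max_eq_right hab.le, excessRatio, max_eq_left (by linarith), inv_div,
      one_sub_div (hb.trans hba).ne']

theorem one_sub_inv_max_le_add {x y : ℝ} (hx : 1 ≤ x) (hy : 1 ≤ y) :
    1 - (max x y)⁻¹ ≤ (1 - x⁻¹) + (1 - y⁻¹) := by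
  have hx' : 0 ≤ 1 - x⁻¹ := sub_nonneg.2 (inv_le_one_of_one_le₀ hx)
  have hy' : 0 ≤ 1 - y⁻¹ := sub_nonneg.2 (inv_le_one_of_one_le₀ hy)
  rcases le_total x y with hxy | hxy
  · rw [max_eq_right hxy]; linarith
  · rw [max_eq_left hxy]; linarith

theorem sub_div_max_le_mul_excessRatio {w a b c d : ℝ} (hw : 0 ≤ w) (ha : 0 ≤ a) (hc : 0 ≤ c) :
    w - w / max 1 (max (a / b) (c / d)) ≤ w * (excessRatio a b + excessRatio c d) := by
  have hmax : max 1 (max (a / b) (c / d)) = max (max 1 (a / b)) (max 1 (c / d)) := by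
    rw [max_max_max_comm, max_self]
  have hloss : 1 - (max 1 (max (a / b) (c / d)))⁻¹ ≤ excessRatio a b + excessRatio c d := by
    rw [hmax]
    refine (one_sub_inv_max_le_add (le_max_left _ _) (le_max_left _ _)).trans ?_
    exact add_le_add (one_sub_inv_max_one_div_le_excessRatio b ha)
      (one_sub_inv_max_one_div_le_excessRatio d hc)
  calc w - w / max 1 (max (a / b) (c / d)) = w * (1 - (max 1 (max (a / b) (c / d)))⁻¹) := by
        ring
    _ ≤ w * (excessRatio a b + excessRatio c d) := mul_le_mul_of_nonneg_left hloss hw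

section VertexWeight

variable [Fintype V] [DecidableEq V] (G : SimpleGraph V) [DecidableRel G.Adj]

theorem vertexWeight_nonneg {w : Sym2 V → ℝ} (hw : ∀ e ∈ G.edgeFinset, 0 ≤ w e) (v : V) :
    0 ≤ vertexWeight G w v :=
  sum_nonneg fun e he => hw e (mem_filter.1 he).1

theorem sum_mul_vertexWeight (w : Sym2 V → ℝ) (f : V → ℝ) :
    ∑ x, f x * vertexWeight G w x = ∑ e ∈ G.edgeFinset, w e * ∑ x ∈ e.toFinset, f x := by
  simp only [vertexWeight, mul_sum, sum_filter]
  rw [sum_comm]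
  refine sum_congr rfl fun e _ => ?_
  have : univ.filter (· ∈ e) = e.toFinset := by ext; simp
  simp only [mul_ite, mul_zero, ← sum_filter, this, mul_comm]

end VertexWeight

theorem size_sub_scaled_le_distV_general (G₁ G₂ : SimpleGraph V) [Fintype V] [DecidableEq V]
    [DecidableRel G₁.Adj] [DecidableRel G₂.Adj]
    (w₁ w₂ : Sym2 V → ℝ)
    (hw₁ : ∀ e ∈ G₁.edgeFinset, 0 ≤ w₁ e ∧ w₁ e ≤ 1)
    (wt : Sym2 V → ℝ)
    (hwt : ∀ u v : V, G₁.Adj u v →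
      wt s(u, v) = w₁ s(u, v) /
        max 1 (max (vertexWeight G₁ w₁ u / vertexWeight G₂ w₂ u)
          (vertexWeight G₁ w₁ v / vertexWeight G₂ w₂ v))) :
    size G₁ w₁ - size G₁ wt ≤ distV G₁ G₂ w₁ w₂ := by
  have hw₁_nonneg : ∀ e ∈ G₁.edgeFinset, 0 ≤ w₁ e := fun e he => (hw₁ e he).1
  set g : V → ℝ := fun x => excessRatio (vertexWeight G₁ w₁ x) (vertexWeight G₂ w₂ x)
  have hedge : ∀ e ∈ G₁.edgeFinset, w₁ e - wt e ≤ w₁ e * ∑ x ∈ e.toFinset, g x := by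
    intro e he
    induction e using Sym2.inductionOn with
    | hf u v =>
      have hadj : G₁.Adj u v := G₁.mem_edgeFinset.1 he
      rw [hwt u v hadj, Sym2.toFinset_mk_eq, sum_pair hadj.ne]
      exact sub_div_max_le_mul_excessRatio (hw₁_nonneg _ he)
        (vertexWeight_nonneg G₁ hw₁_nonneg u) (vertexWeight_nonneg G₁ hw₁_nonneg v)
  calc size G₁ w₁ - size G₁ wt = ∑ e ∈ G₁.edgeFinset, (w₁ e - wt e) := (sum_sub_distrib _ _).symm
    _ ≤ ∑ e ∈ G₁.edgeFinset, w₁ e * ∑ x ∈ e.toFinset, g x := sum_le_sum hedge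
    _ = ∑ x, g x * vertexWeight G₁ w₁ x := (sum_mul_vertexWeight G₁ w₁ g).symm
    _ ≤ distV G₁ G₂ w₁ w₂ := sum_le_sum fun x _ => excessRatio_mul_le_abs_sub _ _

/-- Suppose `w₂(x) > 0` for every vertex `x` that is an endpoint of an edge of `G₁`,
and define `w̃(u,v) = w₁(u,v) / max(1, w₁(u)/w₂(u), w₁(v)/w₂(v))` on every edge of
`G₁`.  Then `size(w₁) - size(w̃) ≤ dist_V(w₁, w₂)`. -/
theorem size_sub_scaled_le_distV (G₁ G₂ : SimpleGraph V) [Fintype V] [DecidableEq V]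
    [DecidableRel G₁.Adj] [DecidableRel G₂.Adj]
    (w₁ w₂ : Sym2 V → ℝ)
    (hw₁ : ∀ e ∈ G₁.edgeFinset, 0 ≤ w₁ e ∧ w₁ e ≤ 1)
    (hw₂ : ∀ e ∈ G₂.edgeFinset, 0 ≤ w₂ e ∧ w₂ e ≤ 1)
    (hpos : ∀ x : V, (∃ e ∈ G₁.edgeFinset, x ∈ e) → 0 < vertexWeight G₂ w₂ x)
    (wt : Sym2 V → ℝ)
    (hwt : ∀ u v : V, G₁.Adj u v →
      wt s(u, v) = w₁ s(u, v) /
        max 1 (max (vertexWeight G₁ w₁ u / vertexWeight G₂ w₂ u)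
          (vertexWeight G₁ w₁ v / vertexWeight G₂ w₂ v))) :
    size G₁ w₁ - size G₁ wt ≤ distV G₁ G₂ w₁ w₂ :=
  size_sub_scaled_le_distV_general G₁ G₂ w₁ w₂ hw₁ wt hwt

end Stmt10
end

section
/- Let G' = (V', E') be a finite simple graph, let β > 0 be a real number, and let w' : E' → [0, 1] be a fractional matching in G' such that for every edge (u, v) ∈ E', either w'(u, v) < β or w'(u) + w'(v) ≤ 1 + β + w'(u, v). Then G' admits an integral matching M' ⊆ E' of size |M'| ≥ (1 + β)^{−1}·size(w'). -/
open Finset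

namespace Stmt11

variable {V : Type*}

/-- Total size of a weight function on the edges of `G`. -/
noncomputable def size (G : SimpleGraph V) [Fintype V] [DecidableEq V] [DecidableRel G.Adj]
    (w : Sym2 V → ℝ) : ℝ :=
  ∑ e ∈ G.edgeFinset, w e

/-- Total weight received by a vertex `v` from the edges of `G` incident on it. -/
noncomputable def vertexWeight (G : SimpleGraph V) [Fintype V] [DecidableEq V]
    [DecidableRel G.Adj] (w : Sym2 V → ℝ) (v : V) : ℝ :=
  ∑ e ∈ G.edgeFinset.filter (fun e => v ∈ e), w e

/-- `w` is a fractional matching in `G`: every edge weight lies in `[0,1]` and every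
vertex receives total weight at most `1`. -/
def IsFractionalMatching (G : SimpleGraph V) [Fintype V] [DecidableEq V] [DecidableRel G.Adj]
    (w : Sym2 V → ℝ) : Prop :=
  (∀ e ∈ G.edgeFinset, 0 ≤ w e ∧ w e ≤ 1) ∧ ∀ v : V, vertexWeight G w v ≤ 1

/-- `M` is an (integral) matching in `G`: a set of edges of `G`, no two of which share
an endpoint. -/
def IsMatching (G : SimpleGraph V) [Fintype V] [DecidableEq V] [DecidableRel G.Adj]
    (M : Finset (Sym2 V)) : Prop :=
  M ⊆ G.edgeFinset ∧ ∀ e ∈ M, ∀ f ∈ M, e ≠ f → ∀ v : V, ¬(v ∈ e ∧ v ∈ f)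

section Aux
set_option linter.unusedSectionVars false

variable [Fintype V] [DecidableEq V]

/-! ### Basic matching infrastructure -/

lemma matching_eq_of_mem {G : SimpleGraph V} [DecidableRel G.Adj] {M : Finset (Sym2 V)}
    (hM : IsMatching G M) {e f : Sym2 V} (he : e ∈ M) (hf : f ∈ M) {x : V}
    (hxe : x ∈ e) (hxf : x ∈ f) : e = f := by
  by_contra hne
  exact hM.2 e he f hf hne x ⟨hxe, hxf⟩

/-- `x` is covered by the matching `M`. -/
def covered (M : Finset (Sym2 V)) (x : V) : Prop := ∃ e ∈ M, x ∈ e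

noncomputable def matchFinset (G : SimpleGraph V) [DecidableRel G.Adj] :
    Finset (Finset (Sym2 V)) :=
  @Finset.filter _ (fun M => IsMatching G M) (Classical.decPred _) G.edgeFinset.powerset

lemma mem_matchFinset {G : SimpleGraph V} [DecidableRel G.Adj] {M : Finset (Sym2 V)} :
    M ∈ matchFinset G ↔ IsMatching G M := by
  rw [matchFinset]
  rw [@Finset.mem_filter _ _ (Classical.decPred _), mem_powerset]
  exact ⟨fun h => h.2, fun h => ⟨h.1, h⟩⟩

/-- The matching number of `G`. -/
noncomputable def nu (G : SimpleGraph V) [DecidableRel G.Adj] : ℕ :=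
  ((matchFinset G).image Finset.card).max' ⟨0, Finset.mem_image.2
    ⟨∅, mem_matchFinset.2 ⟨by simp, by simp⟩, rfl⟩⟩

lemma card_le_nu {G : SimpleGraph V} [DecidableRel G.Adj] {M : Finset (Sym2 V)}
    (hM : IsMatching G M) : M.card ≤ nu G :=
  Finset.le_max' _ _ (Finset.mem_image.2 ⟨M, mem_matchFinset.2 hM, rfl⟩)

lemma exists_nu_matching (G : SimpleGraph V) [DecidableRel G.Adj] :
    ∃ M, IsMatching G M ∧ M.card = nu G := by
  have := Finset.max'_mem ((matchFinset G).image Finset.card) ⟨0, Finset.mem_image.2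
    ⟨∅, mem_matchFinset.2 ⟨by simp, by simp⟩, rfl⟩⟩
  rw [Finset.mem_image] at this
  obtain ⟨M, hM, hc⟩ := this
  exact ⟨M, mem_matchFinset.1 hM, hc⟩

lemma edge_not_diag {G : SimpleGraph V} [DecidableRel G.Adj] {e : Sym2 V}
    (he : e ∈ G.edgeFinset) : ¬e.IsDiag :=
  G.not_isDiag_of_mem_edgeSet (SimpleGraph.mem_edgeFinset.1 he)

lemma other_ne {G : SimpleGraph V} [DecidableRel G.Adj] {e : Sym2 V} {x : V}
    (he : e ∈ G.edgeFinset) (hx : x ∈ e) : Sym2.Mem.other' hx ≠ x := by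
  intro h
  apply edge_not_diag he
  rw [← Sym2.other_spec' hx, h]
  exact Sym2.mk_isDiag_iff.2 rfl

lemma insert_matching {G : SimpleGraph V} [DecidableRel G.Adj] {M : Finset (Sym2 V)}
    (hM : IsMatching G M) {u v : V} (he : s(u, v) ∈ G.edgeFinset)
    (hu : ¬covered M u) (hv : ¬covered M v) :
    IsMatching G (insert s(u, v) M) ∧ (insert s(u, v) M).card = M.card + 1 := by
  have hnotmem : s(u, v) ∉ M := fun h => hu ⟨_, h, by simp⟩
  constructor
  · constructor
    · intro e heM
      rcases Finset.mem_insert.1 heM with rfl | h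
      · exact he
      · exact hM.1 h
    · intro e heM f hfM hne x ⟨hxe, hxf⟩
      rcases Finset.mem_insert.1 heM with rfl | heM' <;>
        rcases Finset.mem_insert.1 hfM with rfl | hfM'
      · exact hne rfl
      · rcases Sym2.mem_iff.1 hxe with rfl | rfl
        · exact hu ⟨f, hfM', hxf⟩
        · exact hv ⟨f, hfM', hxf⟩
      · rcases Sym2.mem_iff.1 hxf with rfl | rfl
        · exact hu ⟨e, heM', hxe⟩
        · exact hv ⟨e, heM', hxe⟩
      · exact hM.2 e heM' f hfM' hne x ⟨hxe, hxf⟩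
  · rw [Finset.card_insert_of_notMem hnotmem]

/-! ### Vertex deletion and restriction -/

def delV (G : SimpleGraph V) (x : V) : SimpleGraph V where
  Adj a b := G.Adj a b ∧ a ≠ x ∧ b ≠ x
  symm := by constructor; intro a b ⟨h1, h2, h3⟩; exact ⟨h1.symm, h3, h2⟩
  loopless := by constructor; intro a ⟨h1, _, _⟩; exact G.irrefl h1

instance (G : SimpleGraph V) [DecidableRel G.Adj] (x : V) : DecidableRel (delV G x).Adj :=
  fun a b => by unfold delV; infer_instance

lemma delV_adj {G : SimpleGraph V} {x a b : V} :
    (delV G x).Adj a b ↔ G.Adj a b ∧ a ≠ x ∧ b ≠ x := Iff.rfl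

lemma delV_le {G : SimpleGraph V} {x : V} : ∀ a b, (delV G x).Adj a b → G.Adj a b :=
  fun _ _ h => h.1

lemma delV_edgeFinset {G : SimpleGraph V} [DecidableRel G.Adj] {x : V} :
    (delV G x).edgeFinset = G.edgeFinset.filter (fun e => x ∉ e) := by
  ext e
  induction e with
  | _ a b =>
    simp only [SimpleGraph.mem_edgeFinset, Finset.mem_filter, SimpleGraph.mem_edgeSet,
      delV_adj, Sym2.mem_iff]
    constructor
    · rintro ⟨h1, h2, h3⟩
      exact ⟨h1, by rintro (rfl | rfl) <;> simp_all⟩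
    · rintro ⟨h1, h2⟩
      push_neg at h2
      exact ⟨h1, fun h => h2.1 h.symm, fun h => h2.2 h.symm⟩

def restr (G : SimpleGraph V) (A : Finset V) : SimpleGraph V where
  Adj a b := G.Adj a b ∧ a ∈ A ∧ b ∈ A
  symm := by constructor; intro a b ⟨h1, h2, h3⟩; exact ⟨h1.symm, h3, h2⟩
  loopless := by constructor; intro a ⟨h1, _, _⟩; exact G.irrefl h1

instance (G : SimpleGraph V) [DecidableRel G.Adj] (A : Finset V) :
    DecidableRel (restr G A).Adj :=
  fun a b => by unfold restr; infer_instance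

lemma restr_le {G : SimpleGraph V} {A : Finset V} : ∀ a b, (restr G A).Adj a b → G.Adj a b :=
  fun _ _ h => h.1

lemma restr_edgeFinset {G : SimpleGraph V} [DecidableRel G.Adj] {A : Finset V} :
    (restr G A).edgeFinset = G.edgeFinset.filter (fun e => ∀ x ∈ e, x ∈ A) := by
  ext e
  induction e with
  | _ a b =>
    simp only [SimpleGraph.mem_edgeFinset, Finset.mem_filter, SimpleGraph.mem_edgeSet,
      Sym2.mem_iff]
    constructor
    · rintro ⟨h1, h2, h3⟩
      refine ⟨h1, ?_⟩
      rintro x (rfl | rfl) <;> assumption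
    · rintro ⟨h1, h2⟩
      exact ⟨h1, h2 a (Or.inl rfl), h2 b (Or.inr rfl)⟩

/-! ### Transfer lemmas for subgraphs -/

variable {G H : SimpleGraph V} [DecidableRel G.Adj] [DecidableRel H.Adj] {w : Sym2 V → ℝ}

lemma sub_edgeFinset (hsub : ∀ x y, H.Adj x y → G.Adj x y) : H.edgeFinset ⊆ G.edgeFinset := by
  intro e he
  induction e with
  | _ a b =>
    rw [SimpleGraph.mem_edgeFinset, SimpleGraph.mem_edgeSet] at he ⊢
    exact hsub _ _ he

lemma isMatching_of_sub (hsub : ∀ x y, H.Adj x y → G.Adj x y) {M : Finset (Sym2 V)}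
    (hM : IsMatching H M) : IsMatching G M :=
  ⟨hM.1.trans (sub_edgeFinset hsub), hM.2⟩

lemma nu_le_of_sub (hsub : ∀ x y, H.Adj x y → G.Adj x y) : nu H ≤ nu G := by
  obtain ⟨M, hM, hc⟩ := exists_nu_matching H
  rw [← hc]
  exact card_le_nu (isMatching_of_sub hsub hM)

lemma vertexWeight_le_of_sub (hsub : ∀ x y, H.Adj x y → G.Adj x y)
    (hnn : ∀ e ∈ G.edgeFinset, 0 ≤ w e) (v : V) :
    vertexWeight H w v ≤ vertexWeight G w v := by
  apply Finset.sum_le_sum_of_subset_of_nonneg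
  · exact Finset.filter_subset_filter _ (sub_edgeFinset hsub)
  · intro e he _
    exact hnn e (Finset.mem_filter.1 he).1

lemma frac_of_sub (hsub : ∀ x y, H.Adj x y → G.Adj x y)
    (hfrac : IsFractionalMatching G w) : IsFractionalMatching H w := by
  refine ⟨fun e he => hfrac.1 e (sub_edgeFinset hsub he), fun v => ?_⟩
  exact le_trans (vertexWeight_le_of_sub hsub (fun e he => (hfrac.1 e he).1) v) (hfrac.2 v)

lemma cond_of_sub (hsub : ∀ x y, H.Adj x y → G.Adj x y)
    (hnn : ∀ e ∈ G.edgeFinset, 0 ≤ w e) (β : ℝ)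
    (hcond : ∀ u v : V, G.Adj u v →
      w s(u, v) < β ∨ vertexWeight G w u + vertexWeight G w v ≤ 1 + β + w s(u, v)) :
    ∀ u v : V, H.Adj u v →
      w s(u, v) < β ∨ vertexWeight H w u + vertexWeight H w v ≤ 1 + β + w s(u, v) := by
  intro u v huv
  rcases hcond u v (hsub _ _ huv) with h | h
  · exact Or.inl h
  · right
    have h1 := vertexWeight_le_of_sub hsub hnn u
    have h2 := vertexWeight_le_of_sub hsub hnn v
    linarith

lemma size_sub_split (hsub : ∀ x y, H.Adj x y → G.Adj x y) :
    size G w = size H w + ∑ e ∈ G.edgeFinset \ H.edgeFinset, w e := by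
  rw [size, size, ← Finset.sum_sdiff (sub_edgeFinset hsub), add_comm]

lemma rm1 {u v : V} (huv : G.Adj u v) :
    ∑ e ∈ G.edgeFinset.filter (fun e => u ∈ e ∨ v ∈ e), w e
      = vertexWeight G w u + vertexWeight G w v - w s(u, v) := by
  have hne : u ≠ v := huv.ne
  have hinter : (G.edgeFinset.filter (fun e => u ∈ e)) ∩ (G.edgeFinset.filter (fun e => v ∈ e))
      = {s(u, v)} := by
    ext e
    simp only [Finset.mem_inter, Finset.mem_filter, Finset.mem_singleton]
    constructor
    · rintro ⟨⟨he, hu⟩, ⟨_, hv⟩⟩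
      exact (Sym2.mem_and_mem_iff hne).1 ⟨hu, hv⟩
    · rintro rfl
      have : s(u, v) ∈ G.edgeFinset := by
        rw [SimpleGraph.mem_edgeFinset, SimpleGraph.mem_edgeSet]; exact huv
      exact ⟨⟨this, by simp⟩, ⟨this, by simp⟩⟩
  have hkey := Finset.sum_union_inter (s₁ := G.edgeFinset.filter (fun e => u ∈ e))
    (s₂ := G.edgeFinset.filter (fun e => v ∈ e)) (f := w)
  rw [← Finset.filter_or, hinter, Finset.sum_singleton] at hkey
  unfold vertexWeight
  linarith

lemma nu_congr {G H : SimpleGraph V} [DecidableRel G.Adj] [DecidableRel H.Adj]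
    (h : G.edgeFinset = H.edgeFinset) : nu G = nu H := by
  apply le_antisymm
  · obtain ⟨M, hM, hc⟩ := exists_nu_matching G
    rw [← hc]
    exact card_le_nu (⟨by rw [← h]; exact hM.1, hM.2⟩ : IsMatching H M)
  · obtain ⟨M, hM, hc⟩ := exists_nu_matching H
    rw [← hc]
    exact card_le_nu (⟨by rw [h]; exact hM.1, hM.2⟩ : IsMatching G M)

/-! ### The support of a graph -/

noncomputable def supp (G : SimpleGraph V) [DecidableRel G.Adj] : Finset V :=
  Finset.univ.filter (fun v => ∃ u, G.Adj v u)

lemma mem_supp {G : SimpleGraph V} [DecidableRel G.Adj] {v : V} :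
    v ∈ supp G ↔ ∃ u, G.Adj v u := by
  rw [supp, Finset.mem_filter]
  simp

lemma mem_supp_of_edge {G : SimpleGraph V} [DecidableRel G.Adj] {e : Sym2 V} {x : V}
    (he : e ∈ G.edgeFinset) (hx : x ∈ e) : x ∈ supp G := by
  have h2 := Sym2.other_spec' hx
  rw [SimpleGraph.mem_edgeFinset] at he
  rw [mem_supp]
  exact ⟨Sym2.Mem.other' hx, by rw [← SimpleGraph.mem_edgeSet, h2]; exact he⟩

lemma vertexWeight_eq_zero {G : SimpleGraph V} [DecidableRel G.Adj] {v : V}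
    (hv : v ∉ supp G) : vertexWeight G w v = 0 := by
  rw [vertexWeight]
  apply Finset.sum_eq_zero
  intro e he
  rw [Finset.mem_filter] at he
  exact absurd (mem_supp_of_edge he.1 he.2) hv

/-! ### Counting lemmas -/

lemma parity_count : ∀ k : ℕ, (((range k).filter (fun i => i % 2 = 0)).card = (k+1)/2) ∧
    (((range k).filter (fun i => i % 2 = 1)).card = k/2) := by
  intro k
  induction k with
  | zero => simp
  | succ k ih =>
    rw [Finset.range_add_one, Finset.filter_insert, Finset.filter_insert]
    rcases Nat.even_or_odd k with h | h
    · have h0 : k % 2 = 0 := Nat.even_iff.1 h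
      rw [if_pos h0, if_neg (by omega), Finset.card_insert_of_notMem (by simp)]
      omega
    · have h0 : k % 2 = 1 := Nat.odd_iff.1 h
      rw [if_neg (by omega), if_pos h0, Finset.card_insert_of_notMem (by simp)]
      omega

lemma handshake : ∑ v, vertexWeight G w v = 2 * size G w := by
  have h1 : ∀ v : V, vertexWeight G w v = ∑ e ∈ G.edgeFinset, if v ∈ e then w e else 0 := by
    intro v; rw [vertexWeight, Finset.sum_filter]
  simp_rw [h1]
  rw [Finset.sum_comm, size, Finset.mul_sum]
  apply Finset.sum_congr rfl
  intro e he
  rw [← Finset.sum_filter, Finset.sum_const]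
  have hcard : (Finset.univ.filter (fun x => x ∈ e)).card = 2 := by
    induction e with
    | _ a b =>
      have hab : a ≠ b := by
        intro h
        exact G.not_isDiag_of_mem_edgeSet (SimpleGraph.mem_edgeFinset.1 he)
          (by rw [h]; exact Sym2.mk_isDiag_iff.2 rfl)
      have : Finset.univ.filter (fun x => x ∈ s(a, b)) = {a, b} := by
        ext x; simp [Sym2.mem_iff]
      rw [this, Finset.card_pair hab]
  rw [hcard]
  ring

lemma two_size_le_supp (hfrac : IsFractionalMatching G w) :
    2 * size G w ≤ (supp G).card := by
  rw [← handshake]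
  have hsplit : ∑ v, vertexWeight G w v = ∑ v ∈ supp G, vertexWeight G w v := by
    rw [← Finset.sum_subset (Finset.subset_univ (supp G))]
    intro v _ hv
    exact vertexWeight_eq_zero hv
  rw [hsplit]
  calc ∑ v ∈ supp G, vertexWeight G w v ≤ ∑ _v ∈ supp G, (1:ℝ) :=
        Finset.sum_le_sum (fun v _ => hfrac.2 v)
    _ = (supp G).card := by rw [Finset.sum_const, nsmul_eq_mul, mul_one]

lemma two_card_edge_le : 2 * G.edgeFinset.card ≤ (supp G).card * ((supp G).card - 1) := by
  have hdeg := SimpleGraph.sum_degrees_eq_twice_card_edges G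
  have hsplit : ∑ v, G.degree v = ∑ v ∈ supp G, G.degree v := by
    rw [← Finset.sum_subset (Finset.subset_univ (supp G))]
    intro v _ hv
    rw [← SimpleGraph.card_neighborFinset_eq_degree, Finset.card_eq_zero]
    ext u
    simp only [SimpleGraph.mem_neighborFinset, Finset.notMem_empty, iff_false]
    intro h
    exact hv (mem_supp.2 ⟨u, h⟩)
  have hbound : ∀ v ∈ supp G, G.degree v ≤ (supp G).card - 1 := by
    intro v hv
    rw [← SimpleGraph.card_neighborFinset_eq_degree]
    have hsub : G.neighborFinset v ⊆ (supp G).erase v := by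
      intro u hu
      rw [SimpleGraph.mem_neighborFinset] at hu
      exact Finset.mem_erase.2 ⟨fun h => G.irrefl (v := v) (h ▸ hu), mem_supp.2 ⟨v, hu.symm⟩⟩
    calc (G.neighborFinset v).card ≤ ((supp G).erase v).card := Finset.card_le_card hsub
      _ = (supp G).card - 1 := Finset.card_erase_of_mem hv
  calc 2 * G.edgeFinset.card = ∑ v ∈ supp G, G.degree v := by rw [← hsplit, hdeg]
    _ ≤ ∑ _v ∈ supp G, ((supp G).card - 1) := Finset.sum_le_sum hbound
    _ = (supp G).card * ((supp G).card - 1) := by rw [Finset.sum_const, smul_eq_mul]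

lemma covered_card_le {M : Finset (Sym2 V)} (hM : IsMatching G M) :
    (@Finset.filter _ (fun v => covered M v) (Classical.decPred _) (supp G)).card
      ≤ 2 * M.card := by
  classical
  have hsub : (@Finset.filter _ (fun v => covered M v) (Classical.decPred _) (supp G))
      ⊆ M.biUnion (fun e => Finset.univ.filter (fun x => x ∈ e)) := by
    intro v hv
    rw [@Finset.mem_filter _ _ (Classical.decPred _)] at hv
    obtain ⟨e, heM, hve⟩ := hv.2
    exact Finset.mem_biUnion.2 ⟨e, heM, Finset.mem_filter.2 ⟨Finset.mem_univ v, hve⟩⟩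
  calc _ ≤ (M.biUnion (fun e => Finset.univ.filter (fun x => x ∈ e))).card :=
        Finset.card_le_card hsub
    _ ≤ ∑ e ∈ M, (Finset.univ.filter (fun x => x ∈ e)).card := Finset.card_biUnion_le
    _ ≤ ∑ _e ∈ M, 2 := by
        apply Finset.sum_le_sum
        intro e heM
        induction e with
        | _ a b =>
          have : Finset.univ.filter (fun x => x ∈ s(a, b)) ⊆ {a, b} := by
            intro x hx
            simp only [Finset.mem_filter, Sym2.mem_iff] at hx
            simp [hx.2]
          calc _ ≤ ({a, b} : Finset V).card := Finset.card_le_card this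
            _ ≤ 2 := Finset.card_insert_le _ _ |>.trans (by simp)
    _ = 2 * M.card := by rw [Finset.sum_const, smul_eq_mul, mul_comm]

/-! ### The exchange lemma (alternating paths) -/

def AltP (M N : Finset (Sym2 V)) (t : V) (p : ℕ → V) (k : ℕ) : Prop :=
  p 0 = t ∧ (∀ i ≤ k, ∀ j ≤ k, p i = p j → i = j) ∧
  ∀ i < k, (i % 2 = 0 → s(p i, p (i+1)) ∈ M) ∧ (i % 2 = 1 → s(p i, p (i+1)) ∈ N)

lemma exchange {M N : Finset (Sym2 V)} (hM : IsMatching G M) (hN : IsMatching G N)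
    {t : V} (htM : covered M t) (htN : ¬covered N t) :
    (∃ Y, IsMatching G Y ∧ Y.card = N.card + 1) ∨
    (∃ X z, IsMatching G X ∧ X.card = M.card ∧ ¬covered X t ∧
      ∀ x, ¬covered M x → x ≠ z → ¬covered X x) := by
  classical
  -- K : possible alternating path lengths
  set K : ℕ → Prop := fun k => 1 ≤ k ∧ ∃ p : ℕ → V, AltP M N t p k with hKdef
  obtain ⟨e0, he0M, hte0⟩ := htM
  have ht1 : Sym2.Mem.other' hte0 ≠ t := other_ne (hM.1 he0M) hte0
  have h1K : K 1 := by
    refine ⟨le_refl 1, fun i => match i with | 0 => t | _ + 1 => Sym2.Mem.other' hte0,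
      rfl, ?_, ?_⟩
    · intro i hi j hj hij
      interval_cases i <;> interval_cases j
      · rfl
      · exact absurd (show t = Sym2.Mem.other' hte0 from hij).symm ht1
      · exact absurd (show Sym2.Mem.other' hte0 = t from hij) ht1
      · rfl
    · intro i hi
      interval_cases i
      constructor
      · intro _
        show s(t, Sym2.Mem.other' hte0) ∈ M
        rw [Sym2.other_spec' hte0]
        exact he0M
      · intro h; omega
  -- injectivity bound
  have hbd : ∀ k, K k → k < Fintype.card V := by
    intro k hk
    obtain ⟨-, p, hp0, hinj, -⟩ := hk
    have : Function.Injective (fun i : Fin (k+1) => p i) := by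
      intro i j hij
      exact Fin.ext (hinj i (Nat.lt_succ_iff.1 i.isLt) j (Nat.lt_succ_iff.1 j.isLt) hij)
    have := Fintype.card_le_of_injective _ this
    simpa using this
  have hcardV : 1 ≤ Fintype.card V := by
    have : Nonempty V := ⟨t⟩
    exact Fintype.card_pos
  set k := Nat.findGreatest K (Fintype.card V) with hkdef
  have hkK : K k := Nat.findGreatest_spec hcardV h1K
  have hk1 : 1 ≤ k := Nat.le_findGreatest hcardV h1K
  have hkmax : ¬K (k + 1) := by
    intro hk1K
    have hlt := hbd _ hk1K
    exact Nat.findGreatest_is_greatest (Nat.lt_succ_self k) (by omega) hk1K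
  obtain ⟨-, p, hp0, hinj, hedge⟩ := hkK
  -- basic facts
  have hedge_inj : ∀ i < k, ∀ j < k, s(p i, p (i+1)) = s(p j, p (j+1)) → i = j := by
    intro i hi j hj hij
    rw [Sym2.eq_iff] at hij
    rcases hij with ⟨h1, _⟩ | ⟨h1, h2⟩
    · exact hinj i (by omega) j (by omega) h1
    · have := hinj i (by omega) (j+1) (by omega) h1
      have := hinj (i+1) (by omega) j (by omega) h2
      omega
  set PM : Finset (Sym2 V) :=
    ((range k).filter (fun i => i % 2 = 0)).image (fun i => s(p i, p (i+1))) with hPMdef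
  set PN : Finset (Sym2 V) :=
    ((range k).filter (fun i => i % 2 = 1)).image (fun i => s(p i, p (i+1))) with hPNdef
  have hPMmem : ∀ {e}, e ∈ PM ↔ ∃ i, i < k ∧ i % 2 = 0 ∧ e = s(p i, p (i+1)) := by
    intro e
    simp only [hPMdef, Finset.mem_image, Finset.mem_filter, Finset.mem_range]
    constructor
    · rintro ⟨i, ⟨hi, hp⟩, rfl⟩; exact ⟨i, hi, hp, rfl⟩
    · rintro ⟨i, hi, hp, rfl⟩; exact ⟨i, ⟨hi, hp⟩, rfl⟩
  have hPNmem : ∀ {e}, e ∈ PN ↔ ∃ i, i < k ∧ i % 2 = 1 ∧ e = s(p i, p (i+1)) := by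
    intro e
    simp only [hPNdef, Finset.mem_image, Finset.mem_filter, Finset.mem_range]
    constructor
    · rintro ⟨i, ⟨hi, hp⟩, rfl⟩; exact ⟨i, hi, hp, rfl⟩
    · rintro ⟨i, hi, hp, rfl⟩; exact ⟨i, ⟨hi, hp⟩, rfl⟩
  have hPMsub : PM ⊆ M := by
    intro e he
    obtain ⟨i, hi, hp, rfl⟩ := hPMmem.1 he
    exact (hedge i hi).1 hp
  have hPNsub : PN ⊆ N := by
    intro e he
    obtain ⟨i, hi, hp, rfl⟩ := hPNmem.1 he
    exact (hedge i hi).2 hp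
  have hcardPM : PM.card = (k+1)/2 := by
    rw [hPMdef, Finset.card_image_of_injOn, (parity_count k).1]
    intro i hi j hj hij
    rw [Finset.mem_coe, Finset.mem_filter, Finset.mem_range] at hi hj
    exact hedge_inj i hi.1 j hj.1 hij
  have hcardPN : PN.card = k/2 := by
    rw [hPNdef, Finset.card_image_of_injOn, (parity_count k).2]
    intro i hi j hj hij
    rw [Finset.mem_coe, Finset.mem_filter, Finset.mem_range] at hi hj
    exact hedge_inj i hi.1 j hj.1 hij
  -- vertices of path edges
  have hvertPM : ∀ {e x}, e ∈ PM → x ∈ e → ∃ j, j ≤ k ∧ x = p j := by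
    intro e x he hx
    obtain ⟨i, hi, -, rfl⟩ := hPMmem.1 he
    rcases Sym2.mem_iff.1 hx with rfl | rfl
    · exact ⟨i, by omega, rfl⟩
    · exact ⟨i+1, by omega, rfl⟩
  have hvertPN : ∀ {e x}, e ∈ PN → x ∈ e → ∃ j, j ≤ k ∧ x = p j := by
    intro e x he hx
    obtain ⟨i, hi, -, rfl⟩ := hPNmem.1 he
    rcases Sym2.mem_iff.1 hx with rfl | rfl
    · exact ⟨i, by omega, rfl⟩
    · exact ⟨i+1, by omega, rfl⟩
  -- M-cover of path vertices
  have hMcov : ∀ j, (j < k ∨ (j = k ∧ k % 2 = 1)) → ∃ e ∈ PM, p j ∈ e := by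
    intro j hj
    rcases Nat.even_or_odd j with hpar | hpar
    · have h0 : j % 2 = 0 := Nat.even_iff.1 hpar
      have hjk : j < k := by
        rcases hj with h | ⟨rfl, h⟩
        · exact h
        · omega
      exact ⟨s(p j, p (j+1)), hPMmem.2 ⟨j, hjk, h0, rfl⟩, by simp⟩
    · have h0 : j % 2 = 1 := Nat.odd_iff.1 hpar
      obtain ⟨j', rfl⟩ : ∃ j', j = j' + 1 := ⟨j - 1, by omega⟩
      have hj'k : j' < k := by
        rcases hj with h | ⟨h, hk2⟩ <;> omega
      exact ⟨s(p j', p (j'+1)), hPMmem.2 ⟨j', hj'k, by omega, rfl⟩, by simp⟩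
  -- N-cover of path vertices
  have hNcov : ∀ j, 1 ≤ j → (j < k ∨ (j = k ∧ k % 2 = 0)) → ∃ e ∈ PN, p j ∈ e := by
    intro j hj1 hj
    rcases Nat.even_or_odd j with hpar | hpar
    · have h0 : j % 2 = 0 := Nat.even_iff.1 hpar
      obtain ⟨j', rfl⟩ : ∃ j', j = j' + 1 := ⟨j - 1, by omega⟩
      have hj'k : j' < k := by
        rcases hj with h | ⟨h, hk2⟩ <;> omega
      exact ⟨s(p j', p (j'+1)), hPNmem.2 ⟨j', hj'k, by omega, rfl⟩, by simp⟩
    · have h0 : j % 2 = 1 := Nat.odd_iff.1 hpar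
      have hjk : j < k := by
        rcases hj with h | ⟨rfl, h⟩ <;> omega
      exact ⟨s(p j, p (j+1)), hPNmem.2 ⟨j, hjk, h0, rfl⟩, by simp⟩
  -- uniqueness transfer lemmas
  have hNunique : ∀ e ∈ N, ∀ j, p j ∈ e → 1 ≤ j → (j < k ∨ (j = k ∧ k % 2 = 0)) → e ∈ PN := by
    intro e he j hpj hj1 hj
    obtain ⟨f, hfPN, hpf⟩ := hNcov j hj1 hj
    rwa [matching_eq_of_mem hN he (hPNsub hfPN) hpj hpf]
  have hMunique : ∀ e ∈ M, ∀ j, (j < k ∨ (j = k ∧ k % 2 = 1)) → p j ∈ e → e ∈ PM := by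
    intro e he j hj hpj
    obtain ⟨f, hfPM, hpf⟩ := hMcov j hj
    rwa [matching_eq_of_mem hM he (hPMsub hfPM) hpj hpf]
  have hPMnotN : ∀ e ∈ PM, e ∉ N := by
    intro e hePM heN
    obtain ⟨i, hik, hi0, rfl⟩ := hPMmem.1 hePM
    have hpi : p i ∈ s(p i, p (i+1)) := by simp
    have hi1 : 1 ≤ i := by
      by_contra h
      have hi00 : i = 0 := by omega
      subst hi00
      exact htN ⟨_, heN, by rw [← hp0]; exact hpi⟩
    have hePN := hNunique _ heN i hpi hi1 (Or.inl hik)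
    obtain ⟨j, hjk, hj1, hj2⟩ := hPNmem.1 hePN
    have := hedge_inj i hik j hjk hj2
    omega
  have hPNnotM : ∀ e ∈ PN, e ∉ M := by
    intro e hePN heM
    obtain ⟨i, hik, hi1, rfl⟩ := hPNmem.1 hePN
    have hpi : p i ∈ s(p i, p (i+1)) := by simp
    have hePM := hMunique _ heM i (Or.inl hik) hpi
    obtain ⟨j, hjk, hj0, hj2⟩ := hPMmem.1 hePM
    have := hedge_inj i hik j hjk hj2
    omega
  rcases Nat.even_or_odd k with hke | hko
  · -- k even : build a maximum matching avoiding t (right outcome)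
    have hk0 : k % 2 = 0 := Nat.even_iff.1 hke
    by_cases hzM : covered M (p k)
    · -- extend the path, contradiction with maximality
      exfalso
      obtain ⟨e, heM, hze⟩ := hzM
      have hz'mem : Sym2.Mem.other' hze ∈ e := Sym2.other_mem' hze
      have hz'ne : Sym2.Mem.other' hze ≠ p k := other_ne (hM.1 heM) hze
      have hz'path : ∀ j, j ≤ k → p j ≠ Sym2.Mem.other' hze := by
        intro j hjk hpj
        have hpje : p j ∈ e := hpj ▸ hz'mem
        rcases Nat.eq_or_lt_of_le hjk with rfl | hjlt
        · exact hz'ne hpj.symm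
        · have hePM := hMunique e heM j (Or.inl hjlt) hpje
          obtain ⟨i, hik, hi0, rfl⟩ := hPMmem.1 hePM
          rcases Sym2.mem_iff.1 hze with h | h
          · exact absurd (hinj k le_rfl i (by omega) h) (by omega)
          · exact absurd (hinj k le_rfl (i+1) (by omega) h) (by omega)
      apply hkmax
      refine ⟨by omega, fun i => if i ≤ k then p i else Sym2.Mem.other' hze, ?_, ?_, ?_⟩
      · show (if 0 ≤ k then p 0 else _) = t
        rw [if_pos (Nat.zero_le k)]; exact hp0
      · intro i hi j hj hij
        dsimp only at hij
        by_cases hik : i ≤ k <;> by_cases hjk : j ≤ k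
        · rw [if_pos hik, if_pos hjk] at hij; exact hinj i hik j hjk hij
        · rw [if_pos hik, if_neg hjk] at hij; exact absurd hij (hz'path i hik)
        · rw [if_neg hik, if_pos hjk] at hij; exact absurd hij.symm (hz'path j hjk)
        · omega
      · intro i hik1
        dsimp only
        by_cases hik : i < k
        · constructor
          · intro hpar
            rw [if_pos (show i ≤ k by omega), if_pos (show i+1 ≤ k by omega)]
            exact (hedge i hik).1 hpar
          · intro hpar
            rw [if_pos (show i ≤ k by omega), if_pos (show i+1 ≤ k by omega)]
            exact (hedge i hik).2 hpar
        · have hikk : i = k := by omega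
          subst hikk
          constructor
          · intro _
            rw [if_pos le_rfl, if_neg (by omega), Sym2.other_spec' hze]
            exact heM
          · intro hpar; omega
    · -- z is not M-covered : exchange along the path
      right
      have hMinPM : ∀ f ∈ M, ∀ j, j ≤ k → p j ∈ f → f ∈ PM := by
        intro f hf j hjk hpj
        rcases Nat.eq_or_lt_of_le hjk with rfl | hjlt
        · exact absurd ⟨f, hf, hpj⟩ hzM
        · exact hMunique f hf j (Or.inl hjlt) hpj
      refine ⟨PN ∪ (M \ PM), p k, ?_, ?_, ?_, ?_⟩
      · constructor
        · intro e he
          rcases Finset.mem_union.1 he with h | h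
          · exact hN.1 (hPNsub h)
          · exact hM.1 (Finset.mem_sdiff.1 h).1
        · intro e he f hf hne x hx
          obtain ⟨hxe, hxf⟩ := hx
          rcases Finset.mem_union.1 he with he' | he' <;>
            rcases Finset.mem_union.1 hf with hf' | hf'
          · exact hne (matching_eq_of_mem hN (hPNsub he') (hPNsub hf') hxe hxf)
          · obtain ⟨j, hjk, rfl⟩ := hvertPN he' hxe
            exact (Finset.mem_sdiff.1 hf').2
              (hMinPM f (Finset.mem_sdiff.1 hf').1 j hjk hxf)
          · obtain ⟨j, hjk, rfl⟩ := hvertPN hf' hxf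
            exact (Finset.mem_sdiff.1 he').2
              (hMinPM e (Finset.mem_sdiff.1 he').1 j hjk hxe)
          · exact hne (matching_eq_of_mem hM (Finset.mem_sdiff.1 he').1
              (Finset.mem_sdiff.1 hf').1 hxe hxf)
      · have hdisj : Disjoint PN (M \ PM) := by
          rw [Finset.disjoint_left]
          intro e he hf
          exact hPNnotM e he (Finset.mem_sdiff.1 hf).1
        rw [Finset.card_union_of_disjoint hdisj, Finset.card_sdiff_of_subset hPMsub, hcardPN, hcardPM]
        have hle : (k+1)/2 ≤ M.card := hcardPM ▸ Finset.card_le_card hPMsub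
        omega
      · rintro ⟨e, he, hte⟩
        rcases Finset.mem_union.1 he with he' | he'
        · obtain ⟨i, hik, hi1, rfl⟩ := hPNmem.1 he'
          rw [← hp0] at hte
          rcases Sym2.mem_iff.1 hte with h | h
          · exact absurd (hinj 0 (Nat.zero_le k) i (by omega) h) (by omega)
          · exact absurd (hinj 0 (Nat.zero_le k) (i+1) (by omega) h) (by omega)
        · rw [← hp0] at hte
          exact (Finset.mem_sdiff.1 he').2
            (hMinPM e (Finset.mem_sdiff.1 he').1 0 (Nat.zero_le k) hte)
      · rintro x hxM hxz ⟨e, he, hxe⟩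
        rcases Finset.mem_union.1 he with he' | he'
        · obtain ⟨j, hjk, rfl⟩ := hvertPN he' hxe
          rcases Nat.eq_or_lt_of_le hjk with rfl | hjlt
          · exact hxz rfl
          · obtain ⟨f, hfPM, hpf⟩ := hMcov j (Or.inl hjlt)
            exact hxM ⟨f, hPMsub hfPM, hpf⟩
        · exact hxM ⟨e, (Finset.mem_sdiff.1 he').1, hxe⟩
  · -- k odd : build a matching larger than N (left outcome)
    have hk0 : k % 2 = 1 := Nat.odd_iff.1 hko
    by_cases hzN : covered N (p k)
    · -- extend the path, contradiction with maximality
      exfalso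
      obtain ⟨e, heN, hze⟩ := hzN
      have hz'mem : Sym2.Mem.other' hze ∈ e := Sym2.other_mem' hze
      have hz'ne : Sym2.Mem.other' hze ≠ p k := other_ne (hN.1 heN) hze
      have hz'path : ∀ j, j ≤ k → p j ≠ Sym2.Mem.other' hze := by
        intro j hjk hpj
        have hpje : p j ∈ e := hpj ▸ hz'mem
        rcases Nat.eq_or_lt_of_le hjk with rfl | hjlt
        · exact hz'ne hpj.symm
        · have hj1 : 1 ≤ j := by
            by_contra h
            have hj00 : j = 0 := by omega
            subst hj00
            rw [hp0] at hpje
            exact htN ⟨e, heN, hpje⟩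
          have hePN := hNunique e heN j hpje hj1 (Or.inl hjlt)
          obtain ⟨i, hik, hi1, rfl⟩ := hPNmem.1 hePN
          rcases Sym2.mem_iff.1 hze with h | h
          · exact absurd (hinj k le_rfl i (by omega) h) (by omega)
          · exact absurd (hinj k le_rfl (i+1) (by omega) h) (by omega)
      apply hkmax
      refine ⟨by omega, fun i => if i ≤ k then p i else Sym2.Mem.other' hze, ?_, ?_, ?_⟩
      · show (if 0 ≤ k then p 0 else _) = t
        rw [if_pos (Nat.zero_le k)]; exact hp0
      · intro i hi j hj hij
        dsimp only at hij
        by_cases hik : i ≤ k <;> by_cases hjk : j ≤ k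
        · rw [if_pos hik, if_pos hjk] at hij; exact hinj i hik j hjk hij
        · rw [if_pos hik, if_neg hjk] at hij; exact absurd hij (hz'path i hik)
        · rw [if_neg hik, if_pos hjk] at hij; exact absurd hij.symm (hz'path j hjk)
        · omega
      · intro i hik1
        dsimp only
        by_cases hik : i < k
        · constructor
          · intro hpar
            rw [if_pos (show i ≤ k by omega), if_pos (show i+1 ≤ k by omega)]
            exact (hedge i hik).1 hpar
          · intro hpar
            rw [if_pos (show i ≤ k by omega), if_pos (show i+1 ≤ k by omega)]
            exact (hedge i hik).2 hpar
        · have hikk : i = k := by omega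
          subst hikk
          constructor
          · intro hpar; omega
          · intro _
            rw [if_pos le_rfl, if_neg (by omega), Sym2.other_spec' hze]
            exact heN
    · -- z is not N-covered : augment N along the path
      left
      have hNinPN : ∀ f ∈ N, ∀ j, j ≤ k → p j ∈ f → f ∈ PN := by
        intro f hf j hjk hpj
        rcases Nat.eq_or_lt_of_le hjk with rfl | hjlt
        · exact absurd ⟨f, hf, hpj⟩ hzN
        · have hj1 : 1 ≤ j := by
            by_contra h
            have hj00 : j = 0 := by omega
            subst hj00
            rw [hp0] at hpj
            exact htN ⟨f, hf, hpj⟩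
          exact hNunique f hf j hpj hj1 (Or.inl hjlt)
      refine ⟨PM ∪ (N \ PN), ?_, ?_⟩
      · constructor
        · intro e he
          rcases Finset.mem_union.1 he with h | h
          · exact hM.1 (hPMsub h)
          · exact hN.1 (Finset.mem_sdiff.1 h).1
        · intro e he f hf hne x hx
          obtain ⟨hxe, hxf⟩ := hx
          rcases Finset.mem_union.1 he with he' | he' <;>
            rcases Finset.mem_union.1 hf with hf' | hf'
          · exact hne (matching_eq_of_mem hM (hPMsub he') (hPMsub hf') hxe hxf)
          · obtain ⟨j, hjk, rfl⟩ := hvertPM he' hxe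
            exact (Finset.mem_sdiff.1 hf').2
              (hNinPN f (Finset.mem_sdiff.1 hf').1 j hjk hxf)
          · obtain ⟨j, hjk, rfl⟩ := hvertPM hf' hxf
            exact (Finset.mem_sdiff.1 he').2
              (hNinPN e (Finset.mem_sdiff.1 he').1 j hjk hxe)
          · exact hne (matching_eq_of_mem hN (Finset.mem_sdiff.1 he').1
              (Finset.mem_sdiff.1 hf').1 hxe hxf)
      · have hdisj : Disjoint PM (N \ PN) := by
          rw [Finset.disjoint_left]
          intro e he hf
          exact hPMnotN e he (Finset.mem_sdiff.1 hf).1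
        rw [Finset.card_union_of_disjoint hdisj, Finset.card_sdiff_of_subset hPNsub, hcardPM, hcardPN]
        have hle : k/2 ≤ N.card := hcardPN ▸ Finset.card_le_card hPNsub
        omega


/-! ### Gallai's lemma -/

lemma gallai (hconn : ∀ x y, x ∈ supp G → y ∈ supp G → G.Reachable x y)
    (havoid : ∀ v : V, nu (delV G v) = nu G) :
    (supp G).card ≤ 2 * nu G + 1 := by
  classical
  by_contra hlt
  push_neg at hlt
  -- property of distances between uncovered pairs
  set P : ℕ → Prop := fun d => ∃ M x y, IsMatching G M ∧ M.card = nu G ∧ x ≠ y ∧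
    ¬covered M x ∧ ¬covered M y ∧ G.Reachable x y ∧ G.dist x y = d with hPdef
  have hPex : ∃ d, P d := by
    obtain ⟨M, hM, hMcard⟩ := exists_nu_matching G
    have hcov := covered_card_le (G := G) hM
    have hsplit := Finset.card_filter_add_card_filter_not
      (s := supp G) (p := fun v => covered M v)
    have h2 : 1 < ((supp G).filter (fun v => ¬covered M v)).card := by
      have : (@Finset.filter _ (fun v => ¬covered M v) _ (supp G)).card
          = ((supp G).filter (fun v => ¬covered M v)).card := rfl
      omega
    obtain ⟨x, hx, y, hy, hxy⟩ := Finset.one_lt_card.1 h2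
    rw [Finset.mem_filter] at hx hy
    exact ⟨G.dist x y, M, x, y, hM, hMcard, hxy, hx.2, hy.2,
      hconn x y hx.1 hy.1, rfl⟩
  obtain ⟨M, u, v, hM, hMcard, huv, hu, hv, hreach, hdist⟩ := Nat.find_spec hPex
  have hmin : ∀ d' < Nat.find hPex, ¬P d' := fun d' h => Nat.find_min hPex h
  have hd1 : G.dist u v ≠ 0 := fun h0 => huv (hreach.dist_eq_zero_iff.1 h0)
  have hd2 : G.dist u v ≠ 1 := by
    intro h1
    obtain ⟨pw, hplen⟩ := hreach.exists_walk_length_eq_dist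
    rw [h1] at hplen
    have hadj : G.Adj u v := by
      obtain ⟨t, hadj, q, rfl⟩ := SimpleGraph.Walk.exists_eq_cons_of_ne huv pw
      rw [SimpleGraph.Walk.length_cons] at hplen
      have : q.length = 0 := by omega
      have := (SimpleGraph.Walk.eq_of_length_eq_zero this)
      rwa [this] at hadj
    obtain ⟨hmatch, hcard⟩ := insert_matching hM
      (SimpleGraph.mem_edgeFinset.2 hadj) hu hv
    have := card_le_nu hmatch
    omega
  obtain ⟨pw, hplen⟩ := hreach.exists_walk_length_eq_dist
  obtain ⟨t, hadj, q, rfl⟩ := SimpleGraph.Walk.exists_eq_cons_of_ne huv pw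
  rw [SimpleGraph.Walk.length_cons] at hplen
  have htu : t ≠ u := hadj.ne'
  have hdtv : G.dist t v ≤ G.dist u v - 1 := by
    have := SimpleGraph.dist_le q
    omega
  have hdut : G.dist u t ≤ 1 := by
    have := SimpleGraph.dist_le (SimpleGraph.Walk.cons hadj SimpleGraph.Walk.nil)
    simpa using this
  by_cases htM : covered M t
  · -- t is covered by M; take a maximum matching avoiding t and exchange
    obtain ⟨N0, hN0, hN0card⟩ := exists_nu_matching (delV G t)
    have hN : IsMatching G N0 := isMatching_of_sub delV_le hN0
    have hNcard : N0.card = nu G := by rw [hN0card, havoid t]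
    have htN : ¬covered N0 t := by
      rintro ⟨e, he, hte⟩
      have hmem := hN0.1 he
      rw [delV_edgeFinset, Finset.mem_filter] at hmem
      exact hmem.2 hte
    rcases exchange hM hN htM htN with ⟨Y, hY, hYcard⟩ | ⟨X, z, hX, hXcard, hXt, hXother⟩
    · have := card_le_nu hY
      omega
    · have key : ∃ x0, (x0 = u ∨ x0 = v) ∧ x0 ≠ z := by
        by_cases hz : u = z
        · exact ⟨v, Or.inr rfl, fun h => huv (by rw [hz, h])⟩
        · exact ⟨u, Or.inl rfl, hz⟩
      obtain ⟨x0, hx0or, hx0z⟩ := key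
      have hx0M : ¬covered M x0 := by
        rcases hx0or with rfl | rfl
        · exact hu
        · exact hv
      have hXx0 : ¬covered X x0 := hXother x0 hx0M hx0z
      have htx0 : t ≠ x0 := by
        intro h
        apply hx0M
        rw [← h]
        exact htM
      have hreach_t : G.Reachable t x0 := by
        rcases hx0or with rfl | rfl
        · exact hadj.symm.reachable
        · exact q.reachable
      have hdlt : G.dist t x0 < Nat.find hPex := by
        rcases hx0or with rfl | rfl
        · have h1 : G.dist t x0 ≤ 1 := by
            have := SimpleGraph.dist_le (SimpleGraph.Walk.cons hadj.symm SimpleGraph.Walk.nil)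
            simpa using this
          omega
        · omega
      exact hmin _ hdlt ⟨X, t, x0, hX, hXcard.trans hMcard, htx0, hXt, hXx0, hreach_t, rfl⟩
  · -- t is not covered by M : the pair (u, t) is closer
    have hdlt : G.dist u t < Nat.find hPex := by
      have h0 : G.dist u t ≠ 0 := fun h0 => htu ((hadj.reachable.dist_eq_zero_iff.1 h0).symm)
      omega
    exact hmin _ hdlt ⟨M, u, t, hM, hMcard, fun h => htu h.symm, hu, htM,
      hadj.reachable, rfl⟩

/-! ### Main induction -/

set_option maxHeartbeats 1000000 in
lemma main_induction (β : ℝ) (hβ : 0 < β) : ∀ n : ℕ, ∀ (G' : SimpleGraph V)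
    [DecidableRel G'.Adj], ∀ (w : Sym2 V → ℝ),
    G'.edgeFinset.card ≤ n → IsFractionalMatching G' w →
    (∀ u v : V, G'.Adj u v →
      w s(u, v) < β ∨ vertexWeight G' w u + vertexWeight G' w v ≤ 1 + β + w s(u, v)) →
    ∃ M : Finset (Sym2 V), IsMatching G' M ∧ size G' w ≤ (1 + β) * M.card := by
  intro n
  induction n with
  | zero =>
    intro G inst w hcard hfrac hcond
    refine ⟨∅, ⟨by simp, by simp⟩, ?_⟩
    have hE : G.edgeFinset = ∅ := Finset.card_eq_zero.1 (Nat.le_zero.1 hcard)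
    rw [size, hE]
    simp
  | succ n ih =>
    intro G inst w hcard hfrac hcond
    by_cases hE : G.edgeFinset = ∅
    · refine ⟨∅, ⟨by simp, by simp⟩, ?_⟩
      rw [size, hE]
      simp
    have hnn : ∀ e ∈ G.edgeFinset, 0 ≤ w e := fun e he => (hfrac.1 e he).1
    by_cases hcase1 : ∃ u v : V, G.Adj u v ∧
        vertexWeight G w u + vertexWeight G w v ≤ 1 + β + w s(u, v)
    · -- Case 1 : remove the endpoints of a good edge
      obtain ⟨u, v, hadj, hle⟩ := hcase1
      have he_mem : s(u, v) ∈ G.edgeFinset := by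
        rw [SimpleGraph.mem_edgeFinset, SimpleGraph.mem_edgeSet]; exact hadj
      have hsub : ∀ x y, (delV (delV G u) v).Adj x y → G.Adj x y :=
        fun x y h => delV_le _ _ (delV_le _ _ h)
      have hG2edge : (delV (delV G u) v).edgeFinset
          = G.edgeFinset.filter (fun e => ¬(u ∈ e ∨ v ∈ e)) := by
        rw [delV_edgeFinset, delV_edgeFinset, Finset.filter_filter]
        apply Finset.filter_congr
        intro e _
        constructor
        · rintro ⟨h1, h2⟩ (h | h) <;> simp_all
        · intro h
          push_neg at h
          exact ⟨by simpa using h.1, by simpa using h.2⟩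
      have hcard2 : (delV (delV G u) v).edgeFinset.card ≤ n := by
        have hsub2 : (delV (delV G u) v).edgeFinset ⊆ G.edgeFinset.erase s(u, v) := by
          intro e he
          rw [hG2edge, Finset.mem_filter] at he
          refine Finset.mem_erase.2 ⟨?_, he.1⟩
          rintro rfl
          exact he.2 (Or.inl (by simp))
        have h1 := Finset.card_le_card hsub2
        have h2 := Finset.card_erase_of_mem he_mem
        omega
      obtain ⟨M2, hM2, hsize2⟩ := ih (delV (delV G u) v) w hcard2 (frac_of_sub hsub hfrac)
        (cond_of_sub hsub hnn β hcond)
      have huC : ¬covered M2 u := by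
        rintro ⟨e, he, hue⟩
        have h := hM2.1 he
        rw [hG2edge, Finset.mem_filter] at h
        exact h.2 (Or.inl hue)
      have hvC : ¬covered M2 v := by
        rintro ⟨e, he, hve⟩
        have h := hM2.1 he
        rw [hG2edge, Finset.mem_filter] at h
        exact h.2 (Or.inr hve)
      obtain ⟨hins, hinscard⟩ := insert_matching (isMatching_of_sub hsub hM2) he_mem huC hvC
      refine ⟨insert s(u, v) M2, hins, ?_⟩
      have hsplit := size_sub_split (G := G) (H := delV (delV G u) v) (w := w) hsub
      have hdiff : G.edgeFinset \ (delV (delV G u) v).edgeFinset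
          = G.edgeFinset.filter (fun e => u ∈ e ∨ v ∈ e) := by
        ext e
        rw [Finset.mem_sdiff, hG2edge]
        simp only [Finset.mem_filter]
        tauto
      rw [hsplit, hdiff, rm1 hadj, hinscard]
      push_cast
      nlinarith [hsize2, Finset.card_le_card (hM2.1), hβ]
    · -- no good edge : all edges have small weight
      have hwsmall : ∀ e ∈ G.edgeFinset, w e ≤ β := by
        intro e he
        induction e with
        | _ a b =>
          rw [SimpleGraph.mem_edgeFinset, SimpleGraph.mem_edgeSet] at he
          rcases hcond a b he with h | h
          · exact le_of_lt h
          · exact absurd ⟨a, b, he, h⟩ hcase1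
      by_cases hess : ∃ x, nu (delV G x) < nu G
      · -- Case 2a : an essential vertex exists
        obtain ⟨x, hx⟩ := hess
        have hsub : ∀ a b, (delV G x).Adj a b → G.Adj a b := delV_le
        have hssub : (delV G x).edgeFinset ⊂ G.edgeFinset := by
          refine ⟨sub_edgeFinset hsub, fun hsup => ?_⟩
          have heq : (delV G x).edgeFinset = G.edgeFinset :=
            le_antisymm (sub_edgeFinset hsub) hsup
          rw [nu_congr heq] at hx
          exact lt_irrefl _ hx
        have hcard1 : (delV G x).edgeFinset.card ≤ n := by
          have := Finset.card_lt_card hssub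
          omega
        obtain ⟨M1, hM1, hsize1⟩ := ih (delV G x) w hcard1 (frac_of_sub hsub hfrac)
          (cond_of_sub hsub hnn β hcond)
        obtain ⟨Ms, hMs, hMscard⟩ := exists_nu_matching G
        refine ⟨Ms, hMs, ?_⟩
        have h1 : size G w = size (delV G x) w
            + ∑ e ∈ G.edgeFinset \ (delV G x).edgeFinset, w e :=
          size_sub_split hsub
        have hdiff : G.edgeFinset \ (delV G x).edgeFinset
            = G.edgeFinset.filter (fun e => x ∈ e) := by
          ext e
          rw [Finset.mem_sdiff, delV_edgeFinset]
          simp only [Finset.mem_filter]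
          tauto
        have h2 : ∑ e ∈ G.edgeFinset \ (delV G x).edgeFinset, w e ≤ 1 := by
          rw [hdiff]
          exact hfrac.2 x
        have h3 : (M1.card : ℝ) ≤ (nu (delV G x) : ℝ) := by
          exact_mod_cast card_le_nu hM1
        have h4 : (nu (delV G x) : ℝ) + 1 ≤ (nu G : ℝ) := by
          have h4' : nu (delV G x) + 1 ≤ nu G := hx
          exact_mod_cast h4'
        have h5 : (Ms.card : ℝ) = (nu G : ℝ) := by exact_mod_cast hMscard
        rw [h1, h5]
        have hfin : size (delV G x) w ≤ (1 + β) * ((nu G : ℝ) - 1) := by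
          calc size (delV G x) w ≤ (1 + β) * (M1.card : ℝ) := hsize1
            _ ≤ (1 + β) * ((nu G : ℝ) - 1) := by
                apply mul_le_mul_of_nonneg_left _ (by linarith)
                linarith
        linarith
      · by_cases hdisc : ∃ A : Finset V, (∀ x y, G.Adj x y → (x ∈ A ↔ y ∈ A)) ∧
            (∃ x y, G.Adj x y ∧ x ∈ A) ∧ (∃ x y, G.Adj x y ∧ x ∉ A)
        · -- Case 2b : the graph is disconnected, split it
          obtain ⟨A, hclosed, ⟨x1, y1, hxy1, hx1⟩, ⟨x2, y2, hxy2, hx2⟩⟩ := hdisc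
          have hsubA : ∀ a b, (restr G A).Adj a b → G.Adj a b := restr_le
          have hsubB : ∀ a b, (restr G Aᶜ).Adj a b → G.Adj a b := restr_le
          have hEA : (restr G A).edgeFinset
              = G.edgeFinset.filter (fun e => ∀ z ∈ e, z ∈ A) :=
            restr_edgeFinset
          have hEB : (restr G Aᶜ).edgeFinset
              = G.edgeFinset.filter (fun e => ∀ z ∈ e, z ∉ A) := by
            rw [restr_edgeFinset]
            apply Finset.filter_congr
            intro e _
            simp [Finset.mem_compl]
          have hpart : ∀ e ∈ G.edgeFinset, (∀ z ∈ e, z ∈ A) ∨ (∀ z ∈ e, z ∉ A) := by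
            intro e he
            induction e with
            | _ a b =>
              rw [SimpleGraph.mem_edgeFinset, SimpleGraph.mem_edgeSet] at he
              by_cases hA : a ∈ A
              · left
                rintro z hz
                rcases Sym2.mem_iff.1 hz with rfl | rfl
                · exact hA
                · exact (hclosed _ _ he).1 hA
              · right
                rintro z hz
                rcases Sym2.mem_iff.1 hz with rfl | rfl
                · exact hA
                · intro hB
                  exact hA ((hclosed _ _ he).2 hB)
          have hdisjE : Disjoint (restr G A).edgeFinset (restr G Aᶜ).edgeFinset := by
            rw [Finset.disjoint_left]
            intro e heA heB
            rw [hEA, Finset.mem_filter] at heA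
            rw [hEB, Finset.mem_filter] at heB
            induction e with
            | _ a b => exact heB.2 a (by simp) (heA.2 a (by simp))
          have hunion : (restr G A).edgeFinset ∪ (restr G Aᶜ).edgeFinset = G.edgeFinset := by
            apply Finset.Subset.antisymm
            · exact Finset.union_subset (sub_edgeFinset hsubA) (sub_edgeFinset hsubB)
            · intro e he
              rcases hpart e he with h | h
              · exact Finset.mem_union_left _ (by rw [hEA, Finset.mem_filter]; exact ⟨he, h⟩)
              · exact Finset.mem_union_right _ (by rw [hEB, Finset.mem_filter]; exact ⟨he, h⟩)
          have hcards : (restr G A).edgeFinset.card + (restr G Aᶜ).edgeFinset.card = G.edgeFinset.card := by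
            rw [← Finset.card_union_of_disjoint hdisjE, hunion]
          have hAne : s(x1, y1) ∈ (restr G A).edgeFinset := by
            rw [hEA, Finset.mem_filter]
            refine ⟨by rw [SimpleGraph.mem_edgeFinset, SimpleGraph.mem_edgeSet]; exact hxy1, ?_⟩
            rintro z hz
            rcases Sym2.mem_iff.1 hz with rfl | rfl
            · exact hx1
            · exact (hclosed _ _ hxy1).1 hx1
          have hBne : s(x2, y2) ∈ (restr G Aᶜ).edgeFinset := by
            rw [hEB, Finset.mem_filter]
            refine ⟨by rw [SimpleGraph.mem_edgeFinset, SimpleGraph.mem_edgeSet]; exact hxy2, ?_⟩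
            rintro z hz
            rcases Sym2.mem_iff.1 hz with rfl | rfl
            · exact hx2
            · intro hB
              exact hx2 ((hclosed _ _ hxy2).2 hB)
          have hcardA : (restr G A).edgeFinset.card ≤ n := by
            have hB1 : 1 ≤ (restr G Aᶜ).edgeFinset.card := Finset.card_pos.2 ⟨_, hBne⟩
            omega
          have hcardB : (restr G Aᶜ).edgeFinset.card ≤ n := by
            have hA1 : 1 ≤ (restr G A).edgeFinset.card := Finset.card_pos.2 ⟨_, hAne⟩
            omega
          obtain ⟨MA, hMA, hsizeA⟩ := ih (restr G A) w hcardA (frac_of_sub hsubA hfrac)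
            (cond_of_sub hsubA hnn β hcond)
          obtain ⟨MB, hMB, hsizeB⟩ := ih (restr G Aᶜ) w hcardB (frac_of_sub hsubB hfrac)
            (cond_of_sub hsubB hnn β hcond)
          have hvertA : ∀ e ∈ MA, ∀ z ∈ e, z ∈ A := by
            intro e he z hz
            have h := hMA.1 he
            rw [hEA, Finset.mem_filter] at h
            exact h.2 z hz
          have hvertB : ∀ e ∈ MB, ∀ z ∈ e, z ∉ A := by
            intro e he z hz
            have h := hMB.1 he
            rw [hEB, Finset.mem_filter] at h
            exact h.2 z hz
          have hdisjM : Disjoint MA MB := by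
            rw [Finset.disjoint_left]
            intro e heA heB
            induction e with
            | _ a b => exact hvertB _ heB a (by simp) (hvertA _ heA a (by simp))
          refine ⟨MA ∪ MB, ⟨?_, ?_⟩, ?_⟩
          · intro e he
            rcases Finset.mem_union.1 he with h | h
            · exact sub_edgeFinset hsubA (hMA.1 h)
            · exact sub_edgeFinset hsubB (hMB.1 h)
          · intro e he f hf hne z hz
            obtain ⟨hze, hzf⟩ := hz
            rcases Finset.mem_union.1 he with he' | he' <;>
              rcases Finset.mem_union.1 hf with hf' | hf'
            · exact hMA.2 e he' f hf' hne z ⟨hze, hzf⟩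
            · exact hvertB f hf' z hzf (hvertA e he' z hze)
            · exact hvertB e he' z hze (hvertA f hf' z hzf)
            · exact hMB.2 e he' f hf' hne z ⟨hze, hzf⟩
          · have hsize_split : size G w = size (restr G A) w + size (restr G Aᶜ) w := by
              rw [size, ← hunion, Finset.sum_union hdisjE, size, size]
            rw [hsize_split, Finset.card_union_of_disjoint hdisjM]
            push_cast
            linarith [hsizeA, hsizeB]
        · -- Case 2c : connected kernel, use Gallai's lemma
          have havoid : ∀ x : V, nu (delV G x) = nu G := by
            intro x
            have h1 : nu (delV G x) ≤ nu G := nu_le_of_sub delV_le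
            have h2 : ¬(nu (delV G x) < nu G) := fun h => hess ⟨x, h⟩
            omega
          have hconn : ∀ x y, x ∈ supp G → y ∈ supp G → G.Reachable x y := by
            intro x y hx hy
            by_contra hreach
            apply hdisc
            classical
            refine ⟨Finset.univ.filter (fun z => G.Reachable x z), ?_, ?_, ?_⟩
            · intro a b hab
              simp only [Finset.mem_filter, Finset.mem_univ, true_and]
              exact ⟨fun h => h.trans hab.reachable, fun h => h.trans hab.symm.reachable⟩
            · obtain ⟨u0, hu0⟩ := mem_supp.1 hx
              exact ⟨x, u0, hu0,
                Finset.mem_filter.2 ⟨Finset.mem_univ x, SimpleGraph.Reachable.refl x⟩⟩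
            · obtain ⟨u1, hu1⟩ := mem_supp.1 hy
              refine ⟨y, u1, hu1, ?_⟩
              simp only [Finset.mem_filter, Finset.mem_univ, true_and]
              exact hreach
          have hS := gallai hconn havoid
          obtain ⟨Ms, hMs, hMscard⟩ := exists_nu_matching G
          refine ⟨Ms, hMs, ?_⟩
          -- numerical conclusion
          have hsupp1 : 1 ≤ (supp G).card := by
            obtain ⟨e, he⟩ := Finset.nonempty_of_ne_empty hE
            revert he
            induction e with
            | _ a b =>
              intro he
              exact Finset.card_pos.2 ⟨a, mem_supp_of_edge he (by simp)⟩
          have h1 : 2 * size G w ≤ ((supp G).card : ℝ) := two_size_le_supp hfrac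
          have h2 : size G w ≤ β * (G.edgeFinset.card : ℝ) := by
            have := Finset.sum_le_card_nsmul G.edgeFinset w β hwsmall
            rw [nsmul_eq_mul] at this
            rw [size]
            linarith [this]
          have h3 : 2 * (G.edgeFinset.card : ℝ)
              ≤ ((supp G).card : ℝ) * (((supp G).card : ℝ) - 1) := by
            have hn := two_card_edge_le (G := G)
            have : ((2 * G.edgeFinset.card : ℕ) : ℝ)
                ≤ (((supp G).card * ((supp G).card - 1) : ℕ) : ℝ) := by
              exact_mod_cast hn
            push_cast [Nat.cast_sub hsupp1] at this
            linarith
          have h4 : ((supp G).card : ℝ) ≤ 2 * (nu G : ℝ) + 1 := by exact_mod_cast hS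
          have h5 : (Ms.card : ℝ) = (nu G : ℝ) := by exact_mod_cast hMscard
          rw [h5]
          have hs1 : (1:ℝ) ≤ ((supp G).card : ℝ) := by exact_mod_cast hsupp1
          have hm0 : (0:ℝ) ≤ ((nu G : ℝ)) := Nat.cast_nonneg _
          have hkey : 2 * size G w ≤ (1 + β) * (((supp G).card : ℝ) - 1) := by
            by_cases hc : β * (((supp G).card : ℝ) - 1) ≤ 1
            · have e1 : β * (2 * (G.edgeFinset.card : ℝ))
                  ≤ β * (((supp G).card : ℝ) * (((supp G).card : ℝ) - 1)) :=
                mul_le_mul_of_nonneg_left h3 hβ.le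
              have e2 : (((supp G).card : ℝ) - 1) * (β * (((supp G).card : ℝ) - 1))
                  ≤ (((supp G).card : ℝ) - 1) * 1 :=
                mul_le_mul_of_nonneg_left hc (by linarith)
              have e3 : β * (((supp G).card : ℝ) * (((supp G).card : ℝ) - 1))
                  = (((supp G).card : ℝ) - 1) * (β * (((supp G).card : ℝ) - 1))
                    + β * (((supp G).card : ℝ) - 1) := by ring
              linarith
            · linarith
          have hfin : (1 + β) * (((supp G).card : ℝ) - 1) ≤ (1 + β) * (2 * (nu G : ℝ)) :=
            mul_le_mul_of_nonneg_left (by linarith) (by linarith)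
          have hfin2 : (1 + β) * (2 * (nu G : ℝ)) = 2 * ((1 + β) * (nu G : ℝ)) := by ring
          linarith

end Aux

/-- Let `β > 0` and let `w` be a fractional matching in the finite simple graph `G`
such that every edge `(u,v)` satisfies `w(u,v) < β` or
`w(u) + w(v) ≤ 1 + β + w(u,v)`.  Then `G` admits an integral matching `M` of size
`|M| ≥ (1 + β)⁻¹ · size(w)`. -/
theorem exists_large_matching (G : SimpleGraph V) [Fintype V] [DecidableEq V]
    [DecidableRel G.Adj] (β : ℝ) (hβ : 0 < β) (w : Sym2 V → ℝ)
    (hfrac : IsFractionalMatching G w)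
    (hcond : ∀ u v : V, G.Adj u v →
      w s(u, v) < β ∨ vertexWeight G w u + vertexWeight G w v ≤ 1 + β + w s(u, v)) :
    ∃ M : Finset (Sym2 V), IsMatching G M ∧ (1 + β)⁻¹ * size G w ≤ (M.card : ℝ) := by
  obtain ⟨M, hM, hsize⟩ := main_induction β hβ G.edgeFinset.card G w le_rfl hfrac hcond
  refine ⟨M, hM, ?_⟩
  rw [inv_mul_le_iff₀ (by linarith : (0:ℝ) < 1 + β)]
  exact hsize

end Stmt11
end

section
/- Let ŵ be the discretization of w. Then for every vertex v ∈ V, ŵ(v) ≤ w(v) ≤ (1 + β)·ŵ(v) + β/n, where w(v) denotes the total weight of edges incident on v. -/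
open Finset

namespace Stmt13

variable {V : Type*}

/-- Total size of a weight function on the edges of `G`. -/
noncomputable def size (G : SimpleGraph V) [Fintype V] [DecidableEq V] [DecidableRel G.Adj]
    (w : Sym2 V → ℝ) : ℝ :=
  ∑ e ∈ G.edgeFinset, w e

/-- Total weight received by a vertex `v` from the edges of `G` incident on it. -/
noncomputable def vertexWeight (G : SimpleGraph V) [Fintype V] [DecidableEq V]
    [DecidableRel G.Adj] (w : Sym2 V → ℝ) (v : V) : ℝ :=
  ∑ e ∈ G.edgeFinset.filter (fun e => v ∈ e), w e

/-- The discretization levels `λ_i = (β/n²)·(1+β)^i`. -/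
noncomputable def lam (n : ℕ) (β : ℝ) (i : ℕ) : ℝ :=
  β / (n : ℝ) ^ 2 * (1 + β) ^ i

/-- `K` is the largest integer `j` with `λ_j < β`. -/
def IsLargestLevel (n : ℕ) (β : ℝ) (K : ℕ) : Prop :=
  lam n β K < β ∧ ∀ j : ℕ, lam n β j < β → j ≤ K

/-- `what` is the discretization `ŵ` of `w` (with parameters `β`, `n` and top level `K`):
`ŵ(e) = 0` if `w(e) < λ_0 = β/n²`; `ŵ(e) = λ_i` if `λ_i ≤ w(e) < λ_{i+1}` for some
`i ∈ {0, …, K-1}`; `ŵ(e) = λ_K` if `λ_K ≤ w(e) < β`; and `ŵ(e) = w(e)` if `w(e) ≥ β`. -/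
def IsDiscretization (G : SimpleGraph V) [Fintype V] [DecidableEq V] [DecidableRel G.Adj]
    (n : ℕ) (β : ℝ) (K : ℕ) (w what : Sym2 V → ℝ) : Prop :=
  ∀ e ∈ G.edgeFinset,
    (w e < lam n β 0 → what e = 0) ∧
    (∀ i < K, lam n β i ≤ w e → w e < lam n β (i + 1) → what e = lam n β i) ∧
    (lam n β K ≤ w e → w e < β → what e = lam n β K) ∧
    (β ≤ w e → what e = w e)

/-- For the discretization `ŵ` of `w`: at every vertex `v`,
`ŵ(v) ≤ w(v) ≤ (1+β)·ŵ(v) + β/n`. -/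
theorem discretization_vertex_bounds (G : SimpleGraph V) [Fintype V] [DecidableEq V]
    [DecidableRel G.Adj]
    (β : ℝ) (hβ0 : 0 < β) (hβ1 : β < 1)
    (hn : 2 ≤ Fintype.card V)
    (w what : Sym2 V → ℝ)
    (hw : ∀ e ∈ G.edgeFinset, 0 ≤ w e ∧ w e ≤ 1)
    (K : ℕ) (hK : IsLargestLevel (Fintype.card V) β K)
    (hhat : IsDiscretization G (Fintype.card V) β K w what) :
    ∀ v : V,
      vertexWeight G what v ≤ vertexWeight G w v ∧
      vertexWeight G w v ≤ (1 + β) * vertexWeight G what v + β / (Fintype.card V : ℝ) := by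
  classical
  set n : ℕ := Fintype.card V with hndef
  have hnpos : (0:ℝ) < (n:ℝ) := by
    have : 0 < n := lt_of_lt_of_le (by norm_num) hn
    exact_mod_cast this
  have hlam0 : (0:ℝ) < lam n β 0 := by
    simp only [lam, pow_zero, mul_one]
    positivity
  have hlampos : ∀ i, (0:ℝ) < lam n β i := by
    intro i
    unfold lam
    positivity
  have hlamsucc : ∀ i, lam n β (i+1) = (1 + β) * lam n β i := by
    intro i; unfold lam; ring
  -- key edgewise bounds
  have key : ∀ e ∈ G.edgeFinset,
      what e ≤ w e ∧ w e ≤ (1 + β) * what e + β / (n:ℝ)^2 := by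
    intro e he
    obtain ⟨h0, h1, h2, h3⟩ := hhat e he
    obtain ⟨hw0, hw1⟩ := hw e he
    by_cases hb : β ≤ w e
    · rw [h3 hb]
      constructor
      · exact le_refl _
      · have h4 : (0:ℝ) ≤ β / (n:ℝ)^2 := by positivity
        nlinarith [mul_nonneg hβ0.le hw0]
    push_neg at hb
    by_cases hl : w e < lam n β 0
    · rw [h0 hl]
      constructor
      · exact hw0
      · have : lam n β 0 = β / (n:ℝ)^2 := by simp [lam]
        nlinarith [hw0]
    push_neg at hl
    -- find largest i ≤ K with lam n β i ≤ w e
    set P : ℕ → Prop := fun i => lam n β i ≤ w e with hP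
    have hP0 : P 0 := hl
    set i := Nat.findGreatest P K with hi
    have hiK : i ≤ K := Nat.findGreatest_le K
    have hPi : P i := Nat.findGreatest_spec (Nat.zero_le K) hP0
    rcases lt_or_eq_of_le hiK with hlt | heq
    · have hnot : ¬ P (i+1) :=
        Nat.findGreatest_is_greatest (Nat.lt_succ_self i) (by omega)
      simp only [hP, not_le] at hnot
      rw [h1 i hlt hPi hnot]
      refine ⟨hPi, ?_⟩
      have := hlamsucc i
      have h4 : (0:ℝ) ≤ β / (n:ℝ)^2 := by positivity
      linarith
    · rw [heq] at hPi
      rw [h2 hPi hb]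
      refine ⟨hPi, ?_⟩
      have hK2 : ¬ lam n β (K+1) < β := fun h => by
        have := hK.2 (K+1) h; omega
      push_neg at hK2
      rw [hlamsucc K] at hK2
      have : (0:ℝ) ≤ β / (n:ℝ)^2 := by positivity
      linarith
  intro v
  have hsub : G.edgeFinset.filter (fun e => v ∈ e) ⊆ G.edgeFinset := filter_subset _ _
  constructor
  · apply Finset.sum_le_sum
    intro e he
    exact (key e (hsub he)).1
  · calc vertexWeight G w v
        ≤ ∑ e ∈ G.edgeFinset.filter (fun e => v ∈ e), ((1 + β) * what e + β / (n:ℝ)^2) := by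
          apply Finset.sum_le_sum
          intro e he
          exact (key e (hsub he)).2
      _ = (1 + β) * vertexWeight G what v
            + (G.edgeFinset.filter (fun e => v ∈ e)).card * (β / (n:ℝ)^2) := by
          rw [Finset.sum_add_distrib, ← Finset.mul_sum, Finset.sum_const, nsmul_eq_mul]
          rfl
      _ ≤ (1 + β) * vertexWeight G what v + β / (n:ℝ) := by
          have hcard : (G.edgeFinset.filter (fun e => v ∈ e)).card ≤ n := by
            rw [← SimpleGraph.incidenceFinset_eq_filter]
            rw [SimpleGraph.card_incidenceFinset_eq_degree]
            exact le_of_lt (G.degree_lt_card_verts v)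
          have hcard' : ((G.edgeFinset.filter (fun e => v ∈ e)).card : ℝ) ≤ (n:ℝ) := by
            exact_mod_cast hcard
          have hβn : (0:ℝ) ≤ β / (n:ℝ)^2 := by positivity
          have : ((G.edgeFinset.filter (fun e => v ∈ e)).card : ℝ) * (β / (n:ℝ)^2)
              ≤ (n:ℝ) * (β / (n:ℝ)^2) := by
            exact mul_le_mul_of_nonneg_right hcard' hβn
          have heq2 : (n:ℝ) * (β / (n:ℝ)^2) = β / (n:ℝ) := by
            field_simp
          rw [heq2] at this
          linarith

end Stmt13
end

section
/- Suppose 0 < β < 1/3 (equivalently β < 1 − 2β), w is a fractional matching in G, and ŵ is the discretization of w. If w is a (β, β)-approximately maximal matching in G, then ŵ is a (3β, β)-approximately maximal matching in G. -/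
open Finset

namespace Stmt14

variable {V : Type*}

/-- Total size of a weight function on the edges of `G`. -/
noncomputable def size (G : SimpleGraph V) [Fintype V] [DecidableEq V] [DecidableRel G.Adj]
    (w : Sym2 V → ℝ) : ℝ :=
  ∑ e ∈ G.edgeFinset, w e

/-- Total weight received by a vertex `v` from the edges of `G` incident on it. -/
noncomputable def vertexWeight (G : SimpleGraph V) [Fintype V] [DecidableEq V]
    [DecidableRel G.Adj] (w : Sym2 V → ℝ) (v : V) : ℝ :=
  ∑ e ∈ G.edgeFinset.filter (fun e => v ∈ e), w e

/-- The discretization levels `λ_i = (β/n²)·(1+β)^i`. -/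
noncomputable def lam (n : ℕ) (β : ℝ) (i : ℕ) : ℝ :=
  β / (n : ℝ) ^ 2 * (1 + β) ^ i

/-- `K` is the largest integer `j` with `λ_j < β`. -/
def IsLargestLevel (n : ℕ) (β : ℝ) (K : ℕ) : Prop :=
  lam n β K < β ∧ ∀ j : ℕ, lam n β j < β → j ≤ K

/-- `what` is the discretization `ŵ` of `w` (with parameters `β`, `n` and top level `K`):
`ŵ(e) = 0` if `w(e) < λ_0 = β/n²`; `ŵ(e) = λ_i` if `λ_i ≤ w(e) < λ_{i+1}` for some
`i ∈ {0, …, K-1}`; `ŵ(e) = λ_K` if `λ_K ≤ w(e) < β`; and `ŵ(e) = w(e)` if `w(e) ≥ β`. -/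
def IsDiscretization (G : SimpleGraph V) [Fintype V] [DecidableEq V] [DecidableRel G.Adj]
    (n : ℕ) (β : ℝ) (K : ℕ) (w what : Sym2 V → ℝ) : Prop :=
  ∀ e ∈ G.edgeFinset,
    (w e < lam n β 0 → what e = 0) ∧
    (∀ i < K, lam n β i ≤ w e → w e < lam n β (i + 1) → what e = lam n β i) ∧
    (lam n β K ≤ w e → w e < β → what e = lam n β K) ∧
    (β ≤ w e → what e = w e)

/-- `w` is an `(α, β)`-approximately maximal matching in `G`: for every edge
`(u,v)` of `G`, either `w(u,v) ≥ β`, or some endpoint `x ∈ {u,v}` satisfies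
`w(x) ≥ 1 - α` and `w(x,y) < β` for every edge `(x,y)` of `G` incident on `x`. -/
def ApproxMaximal (G : SimpleGraph V) [Fintype V] [DecidableEq V] [DecidableRel G.Adj]
    (w : Sym2 V → ℝ) (α β : ℝ) : Prop :=
  ∀ u v : V, G.Adj u v →
    β ≤ w s(u, v) ∨
      ∃ x : V, (x = u ∨ x = v) ∧ 1 - α ≤ vertexWeight G w x ∧
        ∀ y : V, G.Adj x y → w s(x, y) < β

/-- Suppose `0 < β < 1/3`, `w` is a fractional matching in `G`, and `ŵ` is the
discretization of `w`.  If `w` is a `(β, β)`-approximately maximal matching in `G`,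
then `ŵ` is a `(3β, β)`-approximately maximal matching in `G`. -/
theorem discretization_approx_maximal (G : SimpleGraph V) [Fintype V] [DecidableEq V]
    [DecidableRel G.Adj]
    (β : ℝ) (hβ0 : 0 < β) (hβ3 : β < 1 / 3)
    (hn : 2 ≤ Fintype.card V)
    (w what : Sym2 V → ℝ)
    (hw : ∀ e ∈ G.edgeFinset, 0 ≤ w e ∧ w e ≤ 1)
    (hfrac : ∀ v : V, vertexWeight G w v ≤ 1)
    (K : ℕ) (hK : IsLargestLevel (Fintype.card V) β K)
    (hhat : IsDiscretization G (Fintype.card V) β K w what)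
    (hmax : ApproxMaximal G w β β) :
    ApproxMaximal G what (3 * β) β := by
  classical
  set n := Fintype.card V with hndef
  have hn2 : (2:ℝ) ≤ (n:ℝ) := by exact_mod_cast hn
  have hn0 : (0:ℝ) < (n:ℝ) := by linarith
  have hlam0 : lam n β 0 = β / (n:ℝ)^2 := by simp [lam]
  have hlampos : ∀ i, 0 < lam n β i := by
    intro i
    have : (0:ℝ) < β / (n:ℝ)^2 := by positivity
    have : (0:ℝ) < (1+β)^i := by positivity
    unfold lam; positivity
  have hlamsucc : ∀ i, lam n β (i+1) = (1+β) * lam n β i := by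
    intro i; unfold lam; rw [pow_succ]; ring
  have hKub : β ≤ lam n β (K+1) := by
    by_contra h
    have := hK.2 (K+1) (lt_of_not_ge h)
    omega
  -- key per-edge estimate
  have key : ∀ e ∈ G.edgeFinset,
      (1-β) * w e - β/(n:ℝ)^2 ≤ what e ∧ (w e < β → what e < β) := by
    intro e he
    obtain ⟨h1, h2, h3, h4⟩ := hhat e he
    obtain ⟨hw0, hw1⟩ := hw e he
    by_cases hc1 : w e < lam n β 0
    · rw [h1 hc1]
      constructor
      · rw [hlam0] at hc1
        nlinarith [mul_nonneg hβ0.le hw0]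
      · intro _; exact hβ0
    · push_neg at hc1
      by_cases hc2 : β ≤ w e
      · rw [h4 hc2]
        have hpos : (0:ℝ) < β/(n:ℝ)^2 := by positivity
        constructor
        · nlinarith [mul_nonneg hβ0.le hw0]
        · intro h; linarith
      · push_neg at hc2
        set P : ℕ → Prop := fun i => lam n β i ≤ w e with hPdef
        have hP0 : P 0 := hc1
        set i := Nat.findGreatest P K with hidef
        have hiK : i ≤ K := Nat.findGreatest_le K
        have hPi : P i := Nat.findGreatest_spec (Nat.zero_le K) hP0
        have hub : w e < lam n β (i+1) := by
          rcases eq_or_lt_of_le hiK with heq | hlt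
          · rw [heq]
            exact lt_of_lt_of_le hc2 hKub
          · by_contra h
            push_neg at h
            exact (Nat.findGreatest_is_greatest (Nat.lt_succ_self i) hlt) h
        have hwhat : what e = lam n β i := by
          rcases eq_or_lt_of_le hiK with heq | hlt
          · exact heq ▸ h3 (heq ▸ hPi) hc2
          · exact h2 i hlt hPi hub
        rw [hwhat]
        have hs := hlamsucc i
        have hlpos := hlampos i
        have hpos : (0:ℝ) < β/(n:ℝ)^2 := by positivity
        constructor
        · -- (1-β) w e - β/n² ≤ λ_i
          have hβl : β * lam n β i ≤ β * w e := by
            exact mul_le_mul_of_nonneg_left hPi hβ0.le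
          nlinarith
        · intro _
          exact lt_of_le_of_lt hPi hc2
  intro u v huv
  have he : s(u,v) ∈ G.edgeFinset := by
    rw [SimpleGraph.mem_edgeFinset]; exact huv
  rcases hmax u v huv with hb | ⟨x, hxuv, hxw, hxlt⟩
  · left
    rw [(hhat _ he).2.2.2 hb]
    exact hb
  · right
    refine ⟨x, hxuv, ?_, ?_⟩
    · -- vertex weight bound
      set S := G.edgeFinset.filter (fun e => x ∈ e) with hSdef
      have hSsub : S ⊆ G.edgeFinset := Finset.filter_subset _ _
      have hcard : (S.card : ℝ) ≤ (n:ℝ) := by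
        have h1 : S = G.incidenceFinset x := by
          rw [SimpleGraph.incidenceFinset_eq_filter]
        have h2 : S.card = G.degree x := by
          rw [h1, SimpleGraph.card_incidenceFinset_eq_degree]
        have h3 : G.degree x < n := G.degree_lt_card_verts x
        have : S.card ≤ n := by omega
        exact_mod_cast this
      have hsum : ∑ e ∈ S, ((1-β) * w e - β/(n:ℝ)^2) ≤ ∑ e ∈ S, what e :=
        Finset.sum_le_sum (fun e hes => (key e (hSsub hes)).1)
      have heq : ∑ e ∈ S, ((1-β) * w e - β/(n:ℝ)^2)
          = (1-β) * vertexWeight G w x - (S.card : ℝ) * (β/(n:ℝ)^2) := by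
        rw [Finset.sum_sub_distrib, ← Finset.mul_sum, Finset.sum_const, nsmul_eq_mul]
        rfl
      have hvw : vertexWeight G what x = ∑ e ∈ S, what e := rfl
      have hcb : (S.card : ℝ) * (β/(n:ℝ)^2) ≤ β/2 := by
        have h1 : (S.card : ℝ) * (β/(n:ℝ)^2) ≤ (n:ℝ) * (β/(n:ℝ)^2) :=
          mul_le_mul_of_nonneg_right hcard (by positivity)
        have h2 : (n:ℝ) * (β/(n:ℝ)^2) = β/(n:ℝ) := by
          field_simp
        have h3 : β/(n:ℝ) ≤ β/2 := by
          apply div_le_div_of_nonneg_left hβ0.le (by norm_num) hn2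
        linarith
      have hvw1 : vertexWeight G w x ≤ 1 := hfrac x
      rw [hvw]
      nlinarith [hsum, heq]
    · intro y hxy
      have hey : s(x,y) ∈ G.edgeFinset := by
        rw [SimpleGraph.mem_edgeFinset]; exact hxy
      exact (key _ hey).2 (hxlt y hxy)


end Stmt14
end

section
/- Let G = (V, E) be a finite simple graph on n ≥ 1 vertices, let 0 < β ≤ 1 be a real number, and let w, ŵ : E → [0, 1] be weight functions such that ŵ(v) ≤ w(v) ≤ (1 + β)·ŵ(v) + β/n for every vertex v ∈ V. If size(w) ≥ 1, then size(w) ≤ (1 + 3β)·size(ŵ). -/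
open Finset

namespace Stmt15

variable {V : Type*}

/-- Total size of a weight function on the edges of `G`. -/
noncomputable def size (G : SimpleGraph V) [Fintype V] [DecidableEq V] [DecidableRel G.Adj]
    (w : Sym2 V → ℝ) : ℝ :=
  ∑ e ∈ G.edgeFinset, w e

/-- Total weight received by a vertex `v` from the edges of `G` incident on it. -/
noncomputable def vertexWeight (G : SimpleGraph V) [Fintype V] [DecidableEq V]
    [DecidableRel G.Adj] (w : Sym2 V → ℝ) (v : V) : ℝ :=
  ∑ e ∈ G.edgeFinset.filter (fun e => v ∈ e), w e

lemma sum_vertexWeight (G : SimpleGraph V) [Fintype V] [DecidableEq V]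
    [DecidableRel G.Adj] (w : Sym2 V → ℝ) :
    ∑ v : V, vertexWeight G w v = 2 * size G w := by
  unfold vertexWeight size
  simp only [Finset.sum_filter]
  rw [Finset.sum_comm, Finset.mul_sum]
  refine Finset.sum_congr rfl fun e he => ?_
  have hne : ¬ e.IsDiag := by
    rw [SimpleGraph.mem_edgeFinset] at he
    exact G.not_isDiag_of_mem_edgeSet he
  induction e with
  | h a b =>
    have hab : a ≠ b := by simpa [Sym2.isDiag_iff_proj_eq] using hne
    have : ∑ v : V, (if v ∈ s(a, b) then w s(a, b) else 0)
        = ∑ v ∈ ({a, b} : Finset V), w s(a, b) := by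
      rw [← Finset.sum_filter]
      congr 1
      ext v
      simp [Sym2.mem_iff]
    rw [this, Finset.sum_pair hab]
    ring

/-- Let `G` be a finite simple graph on `n ≥ 1` vertices, let `0 < β ≤ 1`, and let
`w, ŵ` be weight functions with `ŵ(v) ≤ w(v) ≤ (1+β)·ŵ(v) + β/n` at every vertex `v`.
If `size(w) ≥ 1`, then `size(w) ≤ (1 + 3β)·size(ŵ)`. -/
theorem size_le_of_vertex_bounds (G : SimpleGraph V) [Fintype V] [DecidableEq V]
    [DecidableRel G.Adj]
    (β : ℝ) (hβ0 : 0 < β) (hβ1 : β ≤ 1)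
    (hn : 1 ≤ Fintype.card V)
    (w what : Sym2 V → ℝ)
    (hw : ∀ e ∈ G.edgeFinset, 0 ≤ w e ∧ w e ≤ 1)
    (hwhat : ∀ e ∈ G.edgeFinset, 0 ≤ what e ∧ what e ≤ 1)
    (hvert : ∀ v : V, vertexWeight G what v ≤ vertexWeight G w v ∧
      vertexWeight G w v ≤ (1 + β) * vertexWeight G what v + β / (Fintype.card V : ℝ))
    (hsize : 1 ≤ size G w) :
    size G w ≤ (1 + 3 * β) * size G what := by
  set n := (Fintype.card V : ℝ) with hn'
  have hnpos : (0:ℝ) < n := by rw [hn']; exact_mod_cast Nat.lt_of_lt_of_le Nat.zero_lt_one hn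
  have key : ∑ v : V, vertexWeight G w v ≤
      ∑ v : V, ((1 + β) * vertexWeight G what v + β / n) :=
    Finset.sum_le_sum fun v _ => (hvert v).2
  have hsum : (2:ℝ) * size G w ≤ (1 + β) * (2 * size G what) + β := by
    rw [← sum_vertexWeight]
    refine key.trans ?_
    rw [Finset.sum_add_distrib, ← Finset.mul_sum, sum_vertexWeight]
    have : ∑ _v : V, β / n = β := by
      rw [Finset.sum_const, Finset.card_univ, nsmul_eq_mul]
      field_simp
      exact hn'.symm
    rw [this]
  have hShat : 0 ≤ size G what :=
    Finset.sum_nonneg fun e he => (hwhat e he).1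
  -- β ≤ β * size G w
  have hβS : β ≤ β * size G w := le_mul_of_one_le_right hβ0.le hsize
  have h1 : (2:ℝ) * size G w ≤ (1 + β) * (2 * size G what) + β * size G w :=
    hsum.trans (by linarith)
  -- (2 - β) * S ≤ 2(1+β) Ŝ
  have h2 : (2 - β) * size G w ≤ 2 * (1 + β) * size G what := by nlinarith
  have h3 : 2 * (1 + β) * size G what ≤ (2 - β) * ((1 + 3 * β) * size G what) := by
    nlinarith [mul_nonneg (mul_nonneg hβ0.le hβ0.le) hShat]
  have h4 : (0:ℝ) < 2 - β := by linarith
  nlinarith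

end Stmt15
end
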